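/- arXiv:1801.00296 — 4 statements merged into one kernel-verified Lean document; each statement's English description precedes it below -/
import Mathlib

section
/- For two disjoint graphs G and H, the a-number of their disjoint union equals the product of their a-numbers: a(G ⊔ H) = a(G)·a(H). -/
open scoped Classical

/-- A graph is *even* if every connected component has an even number of vertices. -/
def SimpleGraph.IsEvenGraph {V : Type*} (G : SimpleGraph V) : Prop :=
  ∀ c : G.ConnectedComponent, Even (Nat.card c.supp)

/-- A graph is *odd* if every connected component has an odd number of vertices. -/
def SimpleGraph.IsOddGraph {V : Type*} (G : SimpleGraph V) : Prop :=
  ∀ c : G.ConnectedComponent, Odd (Nat.card c.supp)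

/-- The number of connected components of a graph. -/
noncomputable def SimpleGraph.kappa {V : Type*} (G : SimpleGraph V) : ℕ :=
  Nat.card G.ConnectedComponent

/-- The `a`-number of the induced subgraph `G[s]`, defined recursively:
`1` for the null graph, `0` if `G[s]` is not even, and minus the sum of the
`a`-numbers of all proper induced subgraphs otherwise. -/
noncomputable def aNum {V : Type*} (G : SimpleGraph V) (s : Finset V) : ℤ :=
  if s = ∅ then 1
  else if (G.induce (s : Set V)).IsEvenGraph then
    - ∑ t ∈ (s.powerset.filter (· ≠ s)).attach, aNum G t.1
  else 0
termination_by s.card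
decreasing_by
  have h := t.2
  simp only [Finset.mem_filter, Finset.mem_powerset] at h
  exact Finset.card_lt_card (lt_of_le_of_ne h.1 h.2)

/-- The `b`-number of the induced subgraph `G[s]`, defined recursively:
`1` for the null graph, `0` if `G[s]` is not odd, and minus the sum of the
`b`-numbers of all proper induced subgraphs otherwise. -/
noncomputable def bNum {V : Type*} (G : SimpleGraph V) (s : Finset V) : ℤ :=
  if s = ∅ then 1
  else if (G.induce (s : Set V)).IsOddGraph then
    - ∑ t ∈ (s.powerset.filter (· ≠ s)).attach, bNum G t.1
  else 0
termination_by s.card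
decreasing_by
  have h := t.2
  simp only [Finset.mem_filter, Finset.mem_powerset] at h
  exact Finset.card_lt_card (lt_of_le_of_ne h.1 h.2)

/-- The `a`-number of a finite graph `G`. -/
noncomputable def aNumber {V : Type*} [Fintype V] (G : SimpleGraph V) : ℤ :=
  aNum G Finset.univ

/-- The `b`-number of a finite graph `G`. -/
noncomputable def bNumber {V : Type*} [Fintype V] (G : SimpleGraph V) : ℤ :=
  bNum G Finset.univ

section AuxSum

open SimpleGraph

variable {α β : Type*} {A : SimpleGraph α} {B : SimpleGraph β}

private lemma walk_inl' : ∀ {x y : α ⊕ β} (_ : (A ⊕g B).Walk x y) (a : α), x = Sum.inl a →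
    ∃ a', y = Sum.inl a' ∧ A.Reachable a a' := by
  intro x y p
  induction p with
  | nil => exact fun a h => ⟨a, h, Reachable.refl a⟩
  | cons h q ih =>
    rename_i u v w
    intro a hu
    subst hu
    match v, h with
    | Sum.inl a₂, h =>
      obtain ⟨a', hy, r⟩ := ih a₂ rfl
      exact ⟨a', hy, (SimpleGraph.Adj.reachable (by simpa using h)).trans r⟩

private lemma walk_inr' : ∀ {x y : α ⊕ β} (_ : (A ⊕g B).Walk x y) (b : β), x = Sum.inr b →
    ∃ b', y = Sum.inr b' ∧ B.Reachable b b' := by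
  intro x y p
  induction p with
  | nil => exact fun b h => ⟨b, h, Reachable.refl b⟩
  | cons h q ih =>
    rename_i u v w
    intro b hu
    subst hu
    match v, h with
    | Sum.inr b₂, h =>
      obtain ⟨b', hy, r⟩ := ih b₂ rfl
      exact ⟨b', hy, (SimpleGraph.Adj.reachable (by simpa using h)).trans r⟩

private lemma reach_inl_inl {a a' : α} :
    (A ⊕g B).Reachable (Sum.inl a) (Sum.inl a') ↔ A.Reachable a a' := by
  constructor
  · rintro ⟨p⟩
    obtain ⟨a'', h, r⟩ := walk_inl' p a rfl
    rw [Sum.inl.injEq] at h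
    subst h; exact r
  · exact fun r => r.map SimpleGraph.Embedding.sumInl.toHom

private lemma reach_inr_inr {b b' : β} :
    (A ⊕g B).Reachable (Sum.inr b) (Sum.inr b') ↔ B.Reachable b b' := by
  constructor
  · rintro ⟨p⟩
    obtain ⟨b'', h, r⟩ := walk_inr' p b rfl
    rw [Sum.inr.injEq] at h
    subst h; exact r
  · exact fun r => r.map SimpleGraph.Embedding.sumInr.toHom

private lemma not_reach_inl_inr {a : α} {b : β} :
    ¬ (A ⊕g B).Reachable (Sum.inl a) (Sum.inr b) := by
  rintro ⟨p⟩
  obtain ⟨a', h, -⟩ := walk_inl' p a rfl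
  exact Sum.inr_ne_inl h |>.elim

private lemma supp_mk_inl (a : α) :
    ((A ⊕g B).connectedComponentMk (Sum.inl a)).supp
      = Sum.inl '' (A.connectedComponentMk a).supp := by
  ext x
  simp only [ConnectedComponent.mem_supp_iff, ConnectedComponent.eq, Set.mem_image]
  cases x with
  | inl a' =>
    simp only [Sum.inl.injEq]
    constructor
    · intro h; exact ⟨a', reach_inl_inl.1 h, rfl⟩
    · rintro ⟨a'', h, rfl⟩; exact reach_inl_inl.2 h
  | inr b =>
    constructor
    · intro h; exact (not_reach_inl_inr (h.symm)).elim
    · rintro ⟨a'', h, hc⟩; exact (Sum.inl_ne_inr hc).elim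

private lemma supp_mk_inr (b : β) :
    ((A ⊕g B).connectedComponentMk (Sum.inr b)).supp
      = Sum.inr '' (B.connectedComponentMk b).supp := by
  ext x
  simp only [ConnectedComponent.mem_supp_iff, ConnectedComponent.eq, Set.mem_image]
  cases x with
  | inr b' =>
    simp only [Sum.inr.injEq]
    constructor
    · intro h; exact ⟨b', reach_inr_inr.1 h, rfl⟩
    · rintro ⟨b'', h, rfl⟩; exact reach_inr_inr.2 h
  | inl a =>
    constructor
    · intro h; exact (not_reach_inl_inr h).elim
    · rintro ⟨b'', h, hc⟩; exact (Sum.inr_ne_inl hc).elim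

private lemma isEvenGraph_of_iso {G' : SimpleGraph α} {H' : SimpleGraph β}
    (φ : G' ≃g H') (h : H'.IsEvenGraph) : G'.IsEvenGraph := by
  intro c
  have := h (φ.connectedComponentEquiv c)
  rwa [← Nat.card_congr (SimpleGraph.ConnectedComponent.isoEquivSupp φ c)] at this

private lemma isEvenGraph_iff_of_iso {G' : SimpleGraph α} {H' : SimpleGraph β}
    (φ : G' ≃g H') : G'.IsEvenGraph ↔ H'.IsEvenGraph :=
  ⟨fun h => isEvenGraph_of_iso φ.symm h, fun h => isEvenGraph_of_iso φ h⟩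

private lemma isEvenGraph_sum_iff :
    (A ⊕g B).IsEvenGraph ↔ A.IsEvenGraph ∧ B.IsEvenGraph := by
  constructor
  · intro h
    constructor
    · intro c
      induction c using ConnectedComponent.ind with
      | _ a =>
        have := h ((A ⊕g B).connectedComponentMk (Sum.inl a))
        rwa [supp_mk_inl, Nat.card_image_of_injective Sum.inl_injective] at this
    · intro c
      induction c using ConnectedComponent.ind with
      | _ b =>
        have := h ((A ⊕g B).connectedComponentMk (Sum.inr b))
        rwa [supp_mk_inr, Nat.card_image_of_injective Sum.inr_injective] at this
  · rintro ⟨hA, hB⟩ c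
    induction c using ConnectedComponent.ind with
    | _ x =>
      cases x with
      | inl a =>
        rw [supp_mk_inl, Nat.card_image_of_injective Sum.inl_injective]
        exact hA _
      | inr b =>
        rw [supp_mk_inr, Nat.card_image_of_injective Sum.inr_injective]
        exact hB _

/-- Left part of a finset of a sum type. -/
private noncomputable def fL (u : Finset (α ⊕ β)) : Finset α := u.preimage Sum.inl Sum.inl_injective.injOn

/-- Right part of a finset of a sum type. -/
private noncomputable def fR (u : Finset (α ⊕ β)) : Finset β := u.preimage Sum.inr Sum.inr_injective.injOn

private lemma mem_fL {u : Finset (α ⊕ β)} {a : α} : a ∈ fL u ↔ Sum.inl a ∈ u :=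
  Finset.mem_preimage

private lemma mem_fR {u : Finset (α ⊕ β)} {b : β} : b ∈ fR u ↔ Sum.inr b ∈ u :=
  Finset.mem_preimage

/-- Glue two finsets into a finset of the sum type. -/
private noncomputable def glue (s : Finset α) (t : Finset β) : Finset (α ⊕ β) :=
  s.map ⟨Sum.inl, Sum.inl_injective⟩ ∪ t.map ⟨Sum.inr, Sum.inr_injective⟩

private lemma mem_glue {s : Finset α} {t : Finset β} {x : α ⊕ β} :
    x ∈ glue s t ↔ (∃ a ∈ s, Sum.inl a = x) ∨ (∃ b ∈ t, Sum.inr b = x) := by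
  simp [glue, Finset.mem_union, Finset.mem_map]

private lemma fL_glue {s : Finset α} {t : Finset β} : fL (glue s t) = s := by
  ext a; simp [mem_fL, mem_glue]

private lemma fR_glue {s : Finset α} {t : Finset β} : fR (glue s t) = t := by
  ext b; simp [mem_fR, mem_glue]

private lemma glue_fL_fR {u : Finset (α ⊕ β)} : glue (fL u) (fR u) = u := by
  ext x
  cases x with
  | inl a => simp [mem_glue, mem_fL]
  | inr b => simp [mem_glue, mem_fR]

private lemma fL_subset {u u' : Finset (α ⊕ β)} (h : u' ⊆ u) : fL u' ⊆ fL u :=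
  fun a ha => mem_fL.2 (h (mem_fL.1 ha))

private lemma fR_subset {u u' : Finset (α ⊕ β)} (h : u' ⊆ u) : fR u' ⊆ fR u :=
  fun b hb => mem_fR.2 (h (mem_fR.1 hb))

private lemma glue_subset {u : Finset (α ⊕ β)} {s : Finset α} {t : Finset β}
    (hs : s ⊆ fL u) (ht : t ⊆ fR u) : glue s t ⊆ u := by
  intro x hx
  rcases mem_glue.1 hx with ⟨a, ha, rfl⟩ | ⟨b, hb, rfl⟩
  · exact mem_fL.1 (hs ha)
  · exact mem_fR.1 (ht hb)

private lemma fL_eq_empty_and_fR_eq_empty {u : Finset (α ⊕ β)}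
    (hL : fL u = ∅) (hR : fR u = ∅) : u = ∅ := by
  rw [← glue_fL_fR (u := u), hL, hR]
  ext x; cases x <;> simp [mem_glue]

/-- The equivalence between the vertex sets. -/
private def glueEquiv (u : Finset (α ⊕ β)) :
    {x : α ⊕ β // x ∈ (↑u : Set (α ⊕ β))} ≃
      {a : α // a ∈ (↑(fL u) : Set α)} ⊕ {b : β // b ∈ (↑(fR u) : Set β)} where
  toFun x := match x with
    | ⟨Sum.inl a, h⟩ => Sum.inl ⟨a, by simpa [mem_fL] using h⟩
    | ⟨Sum.inr b, h⟩ => Sum.inr ⟨b, by simpa [mem_fR] using h⟩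
  invFun y := match y with
    | Sum.inl ⟨a, h⟩ => ⟨Sum.inl a, by simpa [mem_fL] using h⟩
    | Sum.inr ⟨b, h⟩ => ⟨Sum.inr b, by simpa [mem_fR] using h⟩
  left_inv := by rintro ⟨x | x, h⟩ <;> rfl
  right_inv := by rintro (⟨a, h⟩ | ⟨b, h⟩) <;> rfl

/-- The induced subgraph of a disjoint sum splits as a disjoint sum. -/
private def induceSumIso (A : SimpleGraph α) (B : SimpleGraph β) (u : Finset (α ⊕ β)) :
    (A ⊕g B).induce ↑u ≃g (A.induce ↑(fL u)) ⊕g (B.induce ↑(fR u)) where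
  toEquiv := glueEquiv u
  map_rel_iff' := by
    rintro ⟨x | x, hx⟩ ⟨y | y, hy⟩ <;>
      first
        | exact Iff.rfl
        | exact iff_of_false not_false not_false

end AuxSum

section AuxANum

open SimpleGraph

variable {V α β : Type*}

private lemma aNum_empty (G : SimpleGraph V) : aNum G ∅ = 1 := by
  rw [aNum]; simp

private lemma induce_empty_isEvenGraph (G : SimpleGraph V) :
    (G.induce (↑(∅ : Finset V) : Set V)).IsEvenGraph := by
  intro c
  obtain ⟨⟨v, hv⟩, -⟩ := c.exists_rep
  simp at hv

private lemma aNum_of_not_evenGraph (G : SimpleGraph V) {s : Finset V}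
    (h : ¬ (G.induce (↑s : Set V)).IsEvenGraph) : aNum G s = 0 := by
  have hs : s ≠ ∅ := by rintro rfl; exact h (induce_empty_isEvenGraph G)
  rw [aNum, if_neg hs, if_neg h]

private lemma sum_powerset_aNum (G : SimpleGraph V) {s : Finset V} (hs : s ≠ ∅)
    (he : (G.induce (↑s : Set V)).IsEvenGraph) :
    ∑ t ∈ s.powerset, aNum G t = 0 := by
  have h1 : aNum G s = - ∑ t ∈ s.powerset.filter (· ≠ s), aNum G t := by
    rw [aNum, if_neg hs, if_pos he, Finset.sum_attach]
  rw [← Finset.sum_erase_add _ _ (Finset.mem_powerset_self s), h1, Finset.filter_ne',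
    add_neg_cancel]

private lemma aNum_sum_eq (G : SimpleGraph α) (H : SimpleGraph β) (u : Finset (α ⊕ β)) :
    aNum (G ⊕g H) u = aNum G (fL u) * aNum H (fR u) := by
  induction u using Finset.strongInductionOn with
  | _ u ih =>
    by_cases hu : u = ∅
    · subst hu
      have hL : fL (α := α) (β := β) (∅ : Finset (α ⊕ β)) = ∅ := by ext a; simp [mem_fL]
      have hR : fR (α := α) (β := β) (∅ : Finset (α ⊕ β)) = ∅ := by ext b; simp [mem_fR]
      rw [hL, hR, aNum_empty, aNum_empty, aNum_empty]; ring
    · have hiso := induceSumIso G H u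
      by_cases he : ((G ⊕g H).induce (↑u : Set (α ⊕ β))).IsEvenGraph
      · obtain ⟨heL, heR⟩ := isEvenGraph_sum_iff.1 ((isEvenGraph_iff_of_iso hiso).1 he)
        have hstep : aNum (G ⊕g H) u
            = - ∑ u' ∈ u.powerset.filter (· ≠ u), aNum G (fL u') * aNum H (fR u') := by
          rw [aNum, if_neg hu, if_pos he, Finset.sum_attach]
          congr 1
          refine Finset.sum_congr (by ext x; simp) fun u' hu' => ?_
          simp only [Finset.mem_filter, Finset.mem_powerset] at hu'
          exact ih u' (lt_of_le_of_ne hu'.1 hu'.2)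
        have hpow : ∑ u' ∈ u.powerset, aNum G (fL u') * aNum H (fR u')
            = (∑ s ∈ (fL u).powerset, aNum G s) * (∑ t ∈ (fR u).powerset, aNum H t) := by
          rw [Finset.sum_mul_sum, ← Finset.sum_product']
          refine Finset.sum_nbij' (fun u' => (fL u', fR u')) (fun p => glue p.1 p.2)
            ?_ ?_ ?_ ?_ ?_
          · intro u' hu'
            rw [Finset.mem_powerset] at hu'
            rw [Finset.mem_product, Finset.mem_powerset, Finset.mem_powerset]
            exact ⟨fL_subset hu', fR_subset hu'⟩
          · intro p hp
            rw [Finset.mem_product, Finset.mem_powerset, Finset.mem_powerset] at hp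
            rw [Finset.mem_powerset]
            exact glue_subset hp.1 hp.2
          · intro u' _; simp only; exact glue_fL_fR
          · intro p _; simp only [fL_glue, fR_glue]
          · intro u' _; rfl
        have hz : ∑ u' ∈ u.powerset, aNum G (fL u') * aNum H (fR u') = 0 := by
          by_cases hL : fL u = ∅
          · have hfR : fR u ≠ ∅ := fun hR => hu (fL_eq_empty_and_fR_eq_empty hL hR)
            rw [hpow, sum_powerset_aNum H hfR heR, mul_zero]
          · rw [hpow, sum_powerset_aNum G hL heL, zero_mul]
        have hsum : (∑ u' ∈ u.powerset.erase u, aNum G (fL u') * aNum H (fR u'))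
            + aNum G (fL u) * aNum H (fR u) = 0 := by
          rw [← hz]
          exact Finset.sum_erase_add _ _ (Finset.mem_powerset_self u)
        rw [hstep, Finset.filter_ne']
        linarith
      · rw [aNum, if_neg hu, if_neg he]
        have hor : ¬ (G.induce (↑(fL u) : Set α)).IsEvenGraph
            ∨ ¬ (H.induce (↑(fR u) : Set β)).IsEvenGraph := by
          by_contra hc
          push_neg at hc
          exact he ((isEvenGraph_iff_of_iso hiso).2 (isEvenGraph_sum_iff.2 ⟨hc.1, hc.2⟩))
        rcases hor with h | h
        · rw [aNum_of_not_evenGraph G h, zero_mul]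
        · rw [aNum_of_not_evenGraph H h, mul_zero]

end AuxANum

/-- For two disjoint graphs `G` and `H`, the `a`-number of their
disjoint union equals the product of their `a`-numbers. -/
theorem aNumber_sum {V W : Type*} [Fintype V] [Fintype W]
    (G : SimpleGraph V) (H : SimpleGraph W) :
    aNumber (G ⊕g H) = aNumber G * aNumber H := by
  have hL : fL (Finset.univ : Finset (V ⊕ W)) = Finset.univ := by ext a; simp [mem_fL]
  have hR : fR (Finset.univ : Finset (V ⊕ W)) = Finset.univ := by ext b; simp [mem_fR]
  rw [aNumber, aNumber, aNumber, aNum_sum_eq, hL, hR]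
end

section
/- If H is an even subgraph of a forest G (every component of H has an even number of vertices), then the line graph L(H) is an odd graph, i.e., every connected component of L(H) has an odd number of vertices. -/
open scoped Classical

namespace SimpleGraph

variable {W : Type*} {K : SimpleGraph W}

lemma isAcyclic_of_injective {α β : Type*} {A : SimpleGraph α} {B : SimpleGraph β}
    (f : A →g B) (hf : Function.Injective f) (hB : B.IsAcyclic) : A.IsAcyclic :=
  fun _ p hp => hB (p.map f) (hp.map hf)

/-- vertices of an edge are reachable from each other -/
lemma reach_of_mem_edge {e : K.edgeSet} {u v : W} (hu : u ∈ (e : Sym2 W))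
    (hv : v ∈ (e : Sym2 W)) : K.Reachable u v := by
  obtain ⟨z, hz⟩ := e
  induction z using Sym2.inductionOn with
  | hf a b =>
    rw [Sym2.mem_iff] at hu hv
    have hab : K.Adj a b := hz
    rcases hu with rfl | rfl <;> rcases hv with rfl | rfl
    · rfl
    · exact hab.reachable
    · exact hab.symm.reachable
    · rfl

lemma reach_of_lineReach {e f : K.edgeSet} (p : K.lineGraph.Walk e f) :
    ∀ u ∈ (e : Sym2 W), ∀ v ∈ (f : Sym2 W), K.Reachable u v := by
  induction p with
  | nil => exact fun u hu v hv => reach_of_mem_edge hu hv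
  | cons hadj p ih =>
    obtain ⟨-, w, hw1, hw2⟩ := hadj
    intro u hu v hv
    exact (reach_of_mem_edge hu hw1).trans (ih w hw2 v hv)

lemma lineReach_of_mem_mem {e f : K.edgeSet} {u : W} (hu : u ∈ (e : Sym2 W))
    (hv : u ∈ (f : Sym2 W)) : K.lineGraph.Reachable e f := by
  by_cases h : e = f
  · exact h ▸ Reachable.refl e
  · exact (Adj.reachable ⟨h, u, hu, hv⟩)

lemma lineReach_of_reach {u v : W} (p : K.Walk u v) :
    ∀ (e f : K.edgeSet), u ∈ (e : Sym2 W) → v ∈ (f : Sym2 W) →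
      K.lineGraph.Reachable e f := by
  induction p with
  | nil => exact fun e f hu hv => lineReach_of_mem_mem hu hv
  | @cons a b c hadj p ih =>
    intro e f hu hv
    have hg : s(a, b) ∈ K.edgeSet := hadj
    refine (lineReach_of_mem_mem (f := ⟨s(a,b), hg⟩) hu ?_).trans (ih _ f ?_ hv)
    · exact Sym2.mem_mk_left a b
    · exact Sym2.mem_mk_right a b

lemma reach_in_induce {s : Set W} {u v : W} (p : K.Walk u v)
    (hs : ∀ z ∈ p.support, z ∈ s) :
    (K.induce s).Reachable ⟨u, hs u p.start_mem_support⟩ ⟨v, hs v p.end_mem_support⟩ := by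
  induction p with
  | nil => rfl
  | @cons a b c hadj p ih =>
    have hb : b ∈ s := hs b (by simp)
    have : (K.induce s).Adj ⟨a, hs a (Walk.start_mem_support _)⟩ ⟨b, hb⟩ := by
      simpa using hadj
    exact this.reachable.trans (ih (fun z hz => hs z (by simp [hz])))

lemma mem_attachWith_edgeSet {s : Set W} {z : Sym2 W} (hz : z ∈ K.edgeSet)
    (h : ∀ a ∈ z, a ∈ s) : z.attachWith h ∈ (K.induce s).edgeSet := by
  induction z using Sym2.inductionOn with
  | hf a b =>
    have : K.Adj a b := hz
    exact this

lemma map_val_mem_edgeSet {s : Set W} {z : Sym2 s} (hz : z ∈ (K.induce s).edgeSet) :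
    z.map Subtype.val ∈ K.edgeSet := by
  induction z using Sym2.inductionOn with
  | hf a b => exact hz

end SimpleGraph

namespace SimpleGraph

lemma key {W : Type*} [Fintype W] (K : SimpleGraph W) (hac : K.IsAcyclic)
    (hev : K.IsEvenGraph) : K.lineGraph.IsOddGraph := by
  intro c
  obtain ⟨e₀, he₀⟩ := c.exists_rep
  obtain ⟨u₀, hu₀⟩ : ∃ u, u ∈ (e₀ : Sym2 W) := ⟨(e₀ : Sym2 W).out.1, Sym2.out_fst_mem _⟩
  set d := K.connectedComponentMk u₀ with hd
  -- membership characterization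
  have key1 : ∀ e : K.edgeSet, e ∈ c.supp → ∀ a ∈ (e : Sym2 W), a ∈ d.supp := by
    intro e he a ha
    have hre : K.lineGraph.Reachable e e₀ := ConnectedComponent.exact (he.trans he₀.symm)
    obtain ⟨p⟩ := hre
    exact (ConnectedComponent.sound (reach_of_lineReach p a ha u₀ hu₀))
  have key2 : ∀ (e : K.edgeSet) (a : W), a ∈ (e : Sym2 W) → a ∈ d.supp → e ∈ c.supp := by
    intro e a ha had
    have hr : K.Reachable a u₀ := ConnectedComponent.exact had
    obtain ⟨p⟩ := hr
    have := lineReach_of_reach p e e₀ ha hu₀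
    exact (ConnectedComponent.sound this).trans he₀
  -- the induced graph on d.supp is a tree
  set T := K.induce d.supp with hT
  have hval : Function.Injective (fun x : d.supp => (x : W)) := Subtype.val_injective
  have hTac : T.IsAcyclic :=
    isAcyclic_of_injective ⟨Subtype.val, fun h => h⟩ Subtype.val_injective hac
  have hTconn : T.Connected := by
    rw [connected_iff]
    constructor
    · rintro ⟨x, hx⟩ ⟨y, hy⟩
      have hr : K.Reachable x y :=
        (ConnectedComponent.exact hx).trans (ConnectedComponent.exact hy).symm
      obtain ⟨p⟩ := hr
      have hs : ∀ z ∈ p.support, z ∈ d.supp := by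
        intro z hz
        have : K.Reachable x z := (p.takeUntil z hz).reachable
        exact (ConnectedComponent.sound this.symm).trans hx
      exact (reach_in_induce p hs)
    · exact ⟨⟨u₀, rfl⟩⟩
  have hTree : T.IsTree := ⟨hTconn, hTac⟩
  -- equivalence between c.supp and T.edgeSet
  have hequiv : Nonempty (c.supp ≃ T.edgeSet) := by
    refine ⟨{
      toFun := fun e => ⟨(e.1 : Sym2 W).attachWith (key1 e.1 e.2),
        mem_attachWith_edgeSet e.1.2 _⟩
      invFun := fun z => ⟨⟨(z : Sym2 d.supp).map Subtype.val, map_val_mem_edgeSet z.2⟩,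
        key2 _ ((z : Sym2 d.supp).out.1 : W) (Sym2.mem_map.mpr ⟨_, Sym2.out_fst_mem _, rfl⟩)
          (z : Sym2 d.supp).out.1.2⟩
      left_inv := ?_
      right_inv := ?_ }⟩
    · rintro ⟨⟨z, hz⟩, he⟩
      ext1; ext1
      exact Sym2.attachWith_map_subtypeVal _
    · rintro ⟨z, hz⟩
      ext1
      apply Sym2.map.injective Subtype.val_injective
      exact Sym2.attachWith_map_subtypeVal _
  obtain ⟨eqv⟩ := hequiv
  have hcard : Nat.card c.supp = Nat.card T.edgeSet := Nat.card_eq_of_bijective eqv eqv.bijective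
  have htree_card : Fintype.card T.edgeSet + 1 = Fintype.card d.supp := by
    have := hTree.card_edgeFinset
    rwa [edgeFinset_card] at this
  have heven : Even (Fintype.card d.supp) := by
    have := hev d
    rwa [Nat.card_eq_fintype_card] at this
  have hpos : 0 < Fintype.card d.supp := Fintype.card_pos_iff.mpr ⟨⟨u₀, rfl⟩⟩
  rw [hcard, Nat.card_eq_fintype_card]
  have : Fintype.card T.edgeSet = Fintype.card d.supp - 1 := by omega
  rw [this]
  exact Nat.Even.sub_odd hpos heven odd_one

end SimpleGraph

/-- if `H` is an even subgraph of a forest `G`, then the line graph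
`L(H)` is an odd graph. -/
theorem lineGraph_isOdd_of_even_subgraph {V : Type*} [Fintype V]
    (G : SimpleGraph V) (hG : G.IsAcyclic) (H : G.Subgraph)
    (hH : H.coe.IsEvenGraph) :
    H.coe.lineGraph.IsOddGraph := by
  have hac : H.coe.IsAcyclic :=
    SimpleGraph.isAcyclic_of_injective ⟨Subtype.val, fun h => h.adj_sub⟩
      Subtype.val_injective hG
  exact SimpleGraph.key H.coe hac hH
end

section
/- For an odd integer n, the b-number of the path P_n with n vertices satisfies b(P_n) = (-1)^{(n+1)/2} · Cat((n-1)/2), where Cat(k) is the k-th Catalan number. -/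
open scoped Classical

open Finset

/-- the signed Catalan sequence -/
def fseq (n : ℕ) : ℤ := if Odd n then (-1) ^ ((n + 1) / 2) * catalan ((n - 1) / 2) else 0

lemma fseq_even {n : ℕ} (h : ¬ Odd n) : fseq n = 0 := if_neg h

lemma fseq_odd (k : ℕ) : fseq (2 * k + 1) = (-1) ^ (k + 1) * catalan k := by
  have h1 : (2 * k + 1 + 1) / 2 = k + 1 := by omega
  have h2 : (2 * k + 1 - 1) / 2 = k := by omega
  rw [fseq, if_pos ⟨k, by ring⟩, h1, h2]

lemma fseq_one : fseq 1 = -1 := by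
  have := fseq_odd 0
  simpa using this

lemma catalan_range (k : ℕ) (hk : 1 ≤ k) :
    (catalan k : ℤ) = ∑ i ∈ range k, (catalan i : ℤ) * catalan (k - 1 - i) := by
  obtain ⟨k, rfl⟩ : ∃ m, k = m + 1 := ⟨k - 1, by omega⟩
  rw [catalan_succ]
  push_cast
  rw [Fin.sum_univ_eq_sum_range (fun i => (catalan i : ℤ) * catalan (k - i)) (k + 1)]

lemma fseq_conv {m : ℕ} (hm : 1 ≤ m) :
    ∑ i ∈ Finset.Ico 1 m, fseq i * fseq (m - i) = fseq (m + 1) := by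
  rcases Nat.even_or_odd m with he | ho
  · -- m even, m = 2k
    obtain ⟨k, hk⟩ := he
    have hk1 : 1 ≤ k := by omega
    have h1 : ∑ i ∈ (Finset.Ico 1 m).filter (fun j => Odd j), fseq i * fseq (m - i)
        = ∑ i ∈ Finset.Ico 1 m, fseq i * fseq (m - i) := by
      refine Finset.sum_filter_of_ne ?_
      intro x hx hne
      by_contra hodd
      exact hne (by rw [fseq_even hodd, zero_mul])
    rw [← h1]
    have h2 : ∑ i ∈ (Finset.Ico 1 m).filter (fun j => Odd j), fseq i * fseq (m - i)
        = ∑ i ∈ range k, fseq (2 * i + 1) * fseq (2 * (k - 1 - i) + 1) := by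
      refine Finset.sum_nbij' (fun j => j / 2) (fun i => 2 * i + 1) ?_ ?_ ?_ ?_ ?_
      · intro a ha
        simp only [Finset.mem_filter, Finset.mem_Ico, Nat.odd_iff] at ha
        simp only [Finset.mem_range]
        omega
      · intro a ha
        simp only [Finset.mem_range] at ha
        simp only [Finset.mem_filter, Finset.mem_Ico, Nat.odd_iff]
        omega
      · intro a ha
        simp only [Finset.mem_filter, Finset.mem_Ico, Nat.odd_iff] at ha
        show 2 * (a / 2) + 1 = a
        omega
      · intro a ha
        show (2 * a + 1) / 2 = a
        omega
      · intro a ha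
        simp only [Finset.mem_filter, Finset.mem_Ico, Nat.odd_iff] at ha
        have e1 : 2 * (a / 2) + 1 = a := by omega
        have e2 : 2 * (k - 1 - a / 2) + 1 = m - a := by omega
        rw [e1, e2]
    rw [h2]
    have h3 : ∀ i ∈ range k, fseq (2 * i + 1) * fseq (2 * (k - 1 - i) + 1)
        = (-1) ^ (k + 1) * ((catalan i : ℤ) * catalan (k - 1 - i)) := by
      intro i hi
      simp only [Finset.mem_range] at hi
      rw [fseq_odd, fseq_odd]
      have : (-1 : ℤ) ^ (i + 1) * (-1) ^ (k - 1 - i + 1) = (-1) ^ (k + 1) := by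
        rw [← pow_add]
        congr 1
        omega
      calc (-1 : ℤ) ^ (i + 1) * catalan i * ((-1) ^ (k - 1 - i + 1) * catalan (k - 1 - i))
          = ((-1 : ℤ) ^ (i + 1) * (-1) ^ (k - 1 - i + 1)) * ((catalan i : ℤ) * catalan (k - 1 - i)) := by ring
        _ = _ := by rw [this]
    rw [Finset.sum_congr rfl h3, ← Finset.mul_sum, ← catalan_range k hk1]
    have : m + 1 = 2 * k + 1 := by omega
    rw [this, fseq_odd]
  · -- m odd : everything vanishes
    have hr : fseq (m + 1) = 0 := fseq_even (by rw [Nat.odd_iff] at ho ⊢; omega)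
    rw [hr]
    apply Finset.sum_eq_zero
    intro i hi
    simp only [Finset.mem_Ico] at hi
    rcases Nat.even_or_odd i with hei | hoi
    · rw [fseq_even (Nat.not_odd_iff_even.mpr hei), zero_mul]
    · refine mul_eq_zero_of_right _ (fseq_even ?_)
      rw [Nat.odd_iff] at ho hoi ⊢
      omega

lemma gap_exists (s : Finset ℕ) (a : ℕ) : ∃ j, a + j ∉ s := by
  refine ⟨s.sup id + 1, fun h => ?_⟩
  have := Finset.le_sup (f := id) h
  simp only [id] at this
  omega

noncomputable def runLen (s : Finset ℕ) (a : ℕ) : ℕ := Nat.find (gap_exists s a)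

lemma runLen_not_mem (s : Finset ℕ) (a : ℕ) : a + runLen s a ∉ s :=
  Nat.find_spec (gap_exists s a)

lemma mem_of_lt_runLen {s : Finset ℕ} {a i : ℕ} (h : i < runLen s a) : a + i ∈ s := by
  have := Nat.find_min (gap_exists s a) h
  simpa using this

lemma runLen_le {s : Finset ℕ} {a m : ℕ} (h : a + m ∉ s) : runLen s a ≤ m :=
  Nat.find_le h

lemma runLen_pos {s : Finset ℕ} {a : ℕ} (h : a ∈ s) : 1 ≤ runLen s a := by
  by_contra hc
  push_neg at hc
  have h0 : runLen s a = 0 := by omega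
  have := runLen_not_mem s a
  rw [h0, add_zero] at this
  exact this h

lemma runLen_eq {s : Finset ℕ} {a m : ℕ} (h1 : ∀ i < m, a + i ∈ s) (h2 : a + m ∉ s) :
    runLen s a = m := by
  refine le_antisymm (runLen_le h2) ?_
  by_contra hc
  push_neg at hc
  exact runLen_not_mem s a (h1 _ hc)

noncomputable def gfun (s : Finset ℕ) : ℤ :=
  if h : s.Nonempty then
    fseq (runLen s (s.min' h)) *
      gfun (s.filter (fun x => s.min' h + runLen s (s.min' h) < x))
  else 1
termination_by s.card
decreasing_by
  apply Finset.card_lt_card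
  rw [Finset.ssubset_iff_of_subset (Finset.filter_subset _ _)]
  refine ⟨s.min' h, s.min'_mem h, ?_⟩
  simp only [Finset.mem_filter, not_and]
  intro _
  omega

noncomputable def vfun (s : Finset ℕ) : ℤ :=
  if h : s.Nonempty then
    -fseq (runLen s (s.min' h) + 1) *
      vfun (s.filter (fun x => s.min' h + runLen s (s.min' h) < x))
  else 1
termination_by s.card
decreasing_by
  apply Finset.card_lt_card
  rw [Finset.ssubset_iff_of_subset (Finset.filter_subset _ _)]
  refine ⟨s.min' h, s.min'_mem h, ?_⟩
  simp only [Finset.mem_filter, not_and]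
  intro _
  omega

lemma gfun_empty : gfun ∅ = 1 := by rw [gfun]; simp

lemma vfun_empty : vfun ∅ = 1 := by rw [vfun]; simp

section decomp

variable {b m : ℕ} {r : Finset ℕ} (hr : ∀ x ∈ r, b + m < x)

lemma decomp_nonempty (hm : 1 ≤ m) : (Finset.Ico b (b + m) ∪ r).Nonempty :=
  ⟨b, by simp [Finset.mem_union, Finset.mem_Ico]; omega⟩

include hr

lemma decomp_min' (hm : 1 ≤ m) (H : (Finset.Ico b (b + m) ∪ r).Nonempty) :
    (Finset.Ico b (b + m) ∪ r).min' H = b := by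
  refine le_antisymm (Finset.min'_le _ _ (by simp [Finset.mem_union, Finset.mem_Ico]; omega)) ?_
  refine Finset.le_min' _ _ _ ?_
  intro y hy
  rcases Finset.mem_union.1 hy with h | h
  · exact (Finset.mem_Ico.1 h).1
  · have := hr y h; omega

lemma decomp_not_mem : b + m ∉ Finset.Ico b (b + m) ∪ r := by
  intro hmem
  rcases Finset.mem_union.1 hmem with h | h
  · simp [Finset.mem_Ico] at h
  · have := hr _ h; omega

lemma decomp_runLen : runLen (Finset.Ico b (b + m) ∪ r) b = m := by
  refine runLen_eq (fun i hi => ?_) (decomp_not_mem hr)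
  exact Finset.mem_union_left _ (by simp [Finset.mem_Ico]; omega)

lemma decomp_filter :
    (Finset.Ico b (b + m) ∪ r).filter (fun x => b + m < x) = r := by
  ext x
  simp only [Finset.mem_filter, Finset.mem_union, Finset.mem_Ico]
  constructor
  · rintro ⟨h1 | h1, h2⟩
    · omega
    · exact h1
  · intro hx
    exact ⟨Or.inr hx, hr x hx⟩

lemma gfun_decomp (hm : 1 ≤ m) :
    gfun (Finset.Ico b (b + m) ∪ r) = fseq m * gfun r := by
  have H := decomp_nonempty (b := b) (r := r) hm
  rw [gfun, dif_pos H, decomp_min' hr hm, decomp_runLen hr, decomp_filter hr]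

lemma vfun_decomp' (hm : 1 ≤ m) :
    vfun (Finset.Ico b (b + m) ∪ r) = -fseq (m + 1) * vfun r := by
  have H := decomp_nonempty (b := b) (r := r) hm
  rw [vfun, dif_pos H, decomp_min' hr hm, decomp_runLen hr, decomp_filter hr]

end decomp

lemma fseq_one' : fseq 1 = -1 := by
  rw [fseq, if_pos odd_one]
  simp [catalan_zero]

lemma vfun_decomp {b m : ℕ} {r : Finset ℕ} (hr : ∀ x ∈ r, b + m < x) :
    vfun (Finset.Ico b (b + m) ∪ r) = -fseq (m + 1) * vfun r := by
  rcases Nat.eq_zero_or_pos m with h0 | h1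
  · subst h0
    rw [fseq_one']
    simp
  · exact vfun_decomp' hr h1

-- (E)
lemma min_decomp (s : Finset ℕ) (h : s.Nonempty) :
    s = Finset.Ico (s.min' h) (s.min' h + runLen s (s.min' h)) ∪
      s.filter (fun x => s.min' h + runLen s (s.min' h) < x) := by
  ext x
  simp only [Finset.mem_union, Finset.mem_Ico, Finset.mem_filter]
  constructor
  · intro hx
    have hax : s.min' h ≤ x := Finset.min'_le _ _ hx
    rcases lt_trichotomy x (s.min' h + runLen s (s.min' h)) with h1 | h1 | h1
    · exact Or.inl ⟨hax, h1⟩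
    · rw [h1] at hx
      exact absurd hx (runLen_not_mem s _)
    · exact Or.inr ⟨hx, h1⟩
  · rintro (⟨h1, h2⟩ | ⟨h1, _⟩)
    · have hx : x = s.min' h + (x - s.min' h) := by omega
      rw [hx]
      exact mem_of_lt_runLen (by omega)
    · exact h1

def runOf (s : Finset ℕ) (v : ℕ) : Finset ℕ :=
  s.filter (fun u => ∀ w ∈ Finset.Icc (min u v) (max u v), w ∈ s)

lemma runOf_head {b m : ℕ} {r : Finset ℕ} (hr : ∀ x ∈ r, b + m < x) {v : ℕ}
    (hv : v ∈ Finset.Ico b (b + m)) :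
    runOf (Finset.Ico b (b + m) ∪ r) v = Finset.Ico b (b + m) := by
  rw [Finset.mem_Ico] at hv
  ext u
  simp only [runOf, Finset.mem_filter, Finset.mem_union, Finset.mem_Ico, Finset.mem_Icc]
  constructor
  · rintro ⟨h1 | h1, h2⟩
    · exact h1
    · exfalso
      have hu := hr u h1
      rcases h2 (b + m) ⟨by omega, by omega⟩ with hc | hc
      · omega
      · exact absurd (hr _ hc) (by omega)
  · intro hu
    refine ⟨Or.inl hu, fun w hw => Or.inl ?_⟩
    omega

lemma runOf_rest {b m : ℕ} {r : Finset ℕ} (hr : ∀ x ∈ r, b + m < x) {v : ℕ}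
    (hv : v ∈ r) :
    runOf (Finset.Ico b (b + m) ∪ r) v = runOf r v := by
  have hvm := hr v hv
  ext u
  simp only [runOf, Finset.mem_filter, Finset.mem_union, Finset.mem_Ico, Finset.mem_Icc]
  constructor
  · rintro ⟨h1 | h1, h2⟩
    · exfalso
      rcases h2 (b + m) ⟨by omega, by omega⟩ with hc | hc
      · omega
      · exact absurd (hr _ hc) (by omega)
    · refine ⟨h1, fun w hw => ?_⟩
      have huv := hr u h1
      rcases h2 w hw with hc | hc
      · exfalso; omega
      · exact hc
  · rintro ⟨h1, h2⟩
    exact ⟨Or.inr h1, fun w hw => Or.inr (h2 w hw)⟩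

def allOdd (s : Finset ℕ) : Prop := ∀ v ∈ s, Odd (runOf s v).card

lemma gfun_eq_zero : ∀ s : Finset ℕ, ¬ allOdd s → gfun s = 0 := by
  intro s
  induction s using Finset.strongInduction with
  | _ s ih =>
    intro hno
    rcases s.eq_empty_or_nonempty with rfl | hne
    · exact absurd (fun v hv => absurd hv (Finset.notMem_empty v)) hno
    set a := s.min' hne with ha
    set j := runLen s a with hj
    set r := s.filter (fun x => a + j < x) with hrdef
    have hrlt : ∀ x ∈ r, a + j < x := fun x hx => (Finset.mem_filter.1 hx).2
    have hdec : s = Finset.Ico a (a + j) ∪ r := min_decomp s hne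
    have hgs : gfun s = fseq j * gfun r := by rw [gfun, dif_pos hne]
    rw [hgs]
    rw [allOdd] at hno
    push_neg at hno
    obtain ⟨v, hv, hodd⟩ := hno
    have hv' := hv
    rw [hdec] at hv'
    rcases Finset.mem_union.1 hv' with hv1 | hv1
    · have heq : runOf s v = Finset.Ico a (a + j) := by
        rw [hdec]
        exact runOf_head hrlt hv1
      rw [heq, Nat.card_Ico] at hodd
      have hsimp : a + j - a = j := by omega
      rw [hsimp] at hodd
      rw [fseq_even hodd, zero_mul]
    · have heq : runOf s v = runOf r v := by
        rw [hdec]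
        exact runOf_rest hrlt hv1
      have hnr : ¬ allOdd r := by
        intro hQ
        exact hodd (heq ▸ hQ v hv1)
      have hrsub : r ⊂ s := by
        rw [hrdef, Finset.ssubset_iff_of_subset (Finset.filter_subset _ _)]
        refine ⟨a, s.min'_mem hne, ?_⟩
        simp only [Finset.mem_filter, not_and]
        intro _
        omega
      rw [ih r hrsub hnr, mul_zero]

noncomputable def usum (s : Finset ℕ) : ℤ := ∑ t ∈ s.powerset, gfun t

lemma coeff_sum {j : ℕ} (hj : 1 ≤ j) :
    -fseq j + ∑ i ∈ Finset.range j, fseq (i + 1) * (-fseq (j - i - 2 + 1)) = -fseq (j + 1) := by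
  obtain ⟨j', rfl⟩ : ∃ j', j = j' + 1 := ⟨j - 1, by omega⟩
  rw [Finset.sum_range_succ]
  have hterm : fseq (j' + 1) * (-fseq (j' + 1 - j' - 2 + 1)) = fseq (j' + 1) := by
    have h1 : j' + 1 - j' - 2 + 1 = 1 := by omega
    rw [h1, fseq_one]; ring
  rw [hterm]
  have hsum : ∑ i ∈ Finset.range j', fseq (i + 1) * (-fseq (j' + 1 - i - 2 + 1))
      = -∑ i ∈ Finset.Ico 1 (j' + 1), fseq i * fseq (j' + 1 - i) := by
    rw [Finset.sum_Ico_eq_sum_range]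
    simp only [Nat.add_sub_cancel]
    rw [← Finset.sum_neg_distrib]
    apply Finset.sum_congr rfl
    intro i hi
    rw [Finset.mem_range] at hi
    have h1 : j' + 1 - i - 2 + 1 = j' + 1 - (1 + i) := by omega
    rw [h1]
    have h2 : i + 1 = 1 + i := by omega
    rw [h2]
    ring
  rw [hsum, fseq_conv (by omega)]
  ring

lemma usum_eq_vfun : ∀ s : Finset ℕ, usum s = vfun s := by
  intro s
  induction s using Finset.strongInduction with
  | _ s ih =>
    rcases s.eq_empty_or_nonempty with rfl | hne
    · rw [usum, Finset.powerset_empty, Finset.sum_singleton, gfun_empty, vfun_empty]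
    set a := s.min' hne with ha
    set j := runLen s a with hj
    set r := s.filter (fun x => a + j < x) with hrdef
    have hrlt : ∀ x ∈ r, a + j < x := fun x hx => (Finset.mem_filter.1 hx).2
    have hdec : s = Finset.Ico a (a + j) ∪ r := min_decomp s hne
    have hams : a ∈ s := s.min'_mem hne
    have hj1 : 1 ≤ j := hj ▸ runLen_pos hams
    have haj : a + j ∉ s := hj ▸ runLen_not_mem s a
    have hales : ∀ x ∈ s, a ≤ x := fun x hx => Finset.min'_le _ _ hx
    -- the fibering function
    set φ : Finset ℕ → ℕ := fun t => if a ∈ t then runLen t a else 0 with hφ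
    have hmaps : ∀ t ∈ s.powerset, φ t ∈ Finset.range (j + 1) := by
      intro t ht
      rw [Finset.mem_powerset] at ht
      rw [Finset.mem_range]
      show (if a ∈ t then runLen t a else 0) < j + 1
      by_cases hat : a ∈ t
      · rw [if_pos hat]
        have h1 : a + j ∉ t := fun hc => haj (ht hc)
        have := runLen_le h1
        omega
      · rw [if_neg hat]; omega
    have hfib := (Finset.sum_fiberwise_of_maps_to hmaps gfun).symm
    -- fiber 0 : subsets avoiding a
    have hfib0 : s.powerset.filter (fun t => φ t = 0) = (s.erase a).powerset := by
      ext t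
      simp only [Finset.mem_filter, Finset.mem_powerset, hφ]
      constructor
      · rintro ⟨h1, h2⟩
        rw [Finset.subset_erase]
        refine ⟨h1, fun hat => ?_⟩
        rw [if_pos hat] at h2
        have := runLen_pos hat
        omega
      · intro h1
        rw [Finset.subset_erase] at h1
        exact ⟨h1.1, by rw [if_neg h1.2]⟩
    -- fibers i+1
    have hfibS : ∀ i, i < j → ∑ t ∈ s.powerset.filter (fun t => φ t = i + 1), gfun t
        = fseq (i + 1) * usum (s.filter (fun x => a + (i + 1) < x)) := by
      intro i hij
      have hfax : ∀ t ∈ s.powerset.filter (fun t => φ t = i + 1),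
          t ⊆ s ∧ a ∈ t ∧ runLen t a = i + 1 := by
        intro t ht
        simp only [Finset.mem_filter, Finset.mem_powerset, hφ] at ht
        obtain ⟨h1, h2⟩ := ht
        by_cases hat : a ∈ t
        · rw [if_pos hat] at h2; exact ⟨h1, hat, h2⟩
        · rw [if_neg hat] at h2; omega
      have hrecon : ∀ t ∈ s.powerset.filter (fun t => φ t = i + 1),
          t = Finset.Ico a (a + (i + 1)) ∪ t.filter (fun x => a + (i + 1) < x) := by
        intro t ht
        obtain ⟨h1, h2, h3⟩ := hfax t ht
        ext x
        simp only [Finset.mem_union, Finset.mem_Ico, Finset.mem_filter]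
        constructor
        · intro hx
          have hax : a ≤ x := hales x (h1 hx)
          rcases lt_trichotomy x (a + (i + 1)) with hlt | heq | hgt
          · exact Or.inl ⟨hax, hlt⟩
          · rw [heq] at hx
            have := runLen_not_mem t a
            rw [h3] at this
            exact absurd hx this
          · exact Or.inr ⟨hx, hgt⟩
        · rintro (⟨hx1, hx2⟩ | ⟨hx1, _⟩)
          · have hxa : x = a + (x - a) := by omega
            rw [hxa]
            exact mem_of_lt_runLen (by omega)
          · exact hx1
      rw [usum, Finset.mul_sum]
      refine Finset.sum_nbij' (fun t => t.filter (fun x => a + (i + 1) < x))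
        (fun u => Finset.Ico a (a + (i + 1)) ∪ u) ?_ ?_ ?_ ?_ ?_
      · intro t ht
        rw [Finset.mem_powerset]
        exact Finset.filter_subset_filter _ (hfax t ht).1
      · intro u hu
        rw [Finset.mem_powerset] at hu
        have hulit : ∀ x ∈ u, a + (i + 1) < x := fun x hx => (Finset.mem_filter.1 (hu hx)).2
        simp only [Finset.mem_filter, Finset.mem_powerset, hφ]
        constructor
        · intro x hx
          rcases Finset.mem_union.1 hx with hx1 | hx1
          · rw [Finset.mem_Ico] at hx1
            have : x = a + (x - a) := by omega
            rw [this]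
            exact mem_of_lt_runLen (by omega)
          · exact (Finset.mem_filter.1 (hu hx1)).1
        · have hmem : a ∈ Finset.Ico a (a + (i + 1)) ∪ u :=
            Finset.mem_union_left _ (by simp [Finset.mem_Ico])
          rw [if_pos hmem]
          exact decomp_runLen hulit
      · intro t ht
        exact (hrecon t ht).symm
      · intro u hu
        rw [Finset.mem_powerset] at hu
        have hulit : ∀ x ∈ u, a + (i + 1) < x := fun x hx => (Finset.mem_filter.1 (hu hx)).2
        exact decomp_filter hulit
      · intro t ht
        have hflt : ∀ x ∈ t.filter (fun x => a + (i + 1) < x), a + (i + 1) < x :=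
          fun x hx => (Finset.mem_filter.1 hx).2
        conv_lhs => rw [hrecon t ht]
        exact gfun_decomp hflt (by omega)
    -- value of vfun on the truncated pieces
    have hvtrunc : ∀ i, i < j → vfun (s.filter (fun x => a + (i + 1) < x))
        = -fseq (j - i - 2 + 1) * vfun r := by
      intro i hij
      by_cases hlast : i + 1 = j
      · have hfeq : s.filter (fun x => a + (i + 1) < x) = r := by rw [hlast, hrdef]
        rw [hfeq]
        have h0 : j - i - 2 + 1 = 1 := by omega
        rw [h0, fseq_one]
        ring
      · have hieq : s.filter (fun x => a + (i + 1) < x)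
            = Finset.Ico (a + i + 2) (a + i + 2 + (j - i - 2)) ∪ r := by
          have hend : a + i + 2 + (j - i - 2) = a + j := by omega
          rw [hend]
          have hrmem : ∀ x : ℕ, x ∈ r ↔ x ∈ s ∧ a + j < x := by
            intro x
            rw [hrdef, Finset.mem_filter]
          ext x
          simp only [Finset.mem_filter, Finset.mem_union, Finset.mem_Ico, hrmem]
          constructor
          · rintro ⟨hx1, hx2⟩
            rcases lt_trichotomy x (a + j) with hlt | heq | hgt
            · exact Or.inl ⟨by omega, hlt⟩
            · rw [heq] at hx1; exact absurd hx1 haj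
            · exact Or.inr ⟨hx1, hgt⟩
          · rintro (⟨hx1, hx2⟩ | ⟨hx1, hx2⟩)
            · constructor
              · have hxa : x = a + (x - a) := by omega
                rw [hxa]
                exact mem_of_lt_runLen (by omega)
              · omega
            · exact ⟨hx1, by omega⟩
        rw [hieq]
        have hrlt2 : ∀ x ∈ r, a + i + 2 + (j - i - 2) < x := by
          intro x hx
          have := hrlt x hx
          omega
        rw [vfun_decomp hrlt2]
    -- erase-a decomposition
    have herase : vfun (s.erase a) = -fseq j * vfun r := by
      have heq : s.erase a = Finset.Ico (a + 1) (a + 1 + (j - 1)) ∪ r := by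
        have hend : a + 1 + (j - 1) = a + j := by omega
        rw [hend]
        have hrmem : ∀ x : ℕ, x ∈ r ↔ x ∈ s ∧ a + j < x := by
          intro x
          rw [hrdef, Finset.mem_filter]
        ext x
        simp only [Finset.mem_erase, Finset.mem_union, Finset.mem_Ico, hrmem]
        constructor
        · rintro ⟨hxa, hxs⟩
          have hax : a ≤ x := hales x hxs
          rcases lt_trichotomy x (a + j) with hlt | heqq | hgt
          · exact Or.inl ⟨by omega, hlt⟩
          · rw [heqq] at hxs; exact absurd hxs haj
          · exact Or.inr ⟨hxs, hgt⟩
        · rintro (⟨hx1, hx2⟩ | ⟨hx1, hx2⟩)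
          · refine ⟨by omega, ?_⟩
            have hxa : x = a + (x - a) := by omega
            rw [hxa]
            exact mem_of_lt_runLen (by omega)
          · exact ⟨by omega, hx1⟩
      have hrlt2 : ∀ x ∈ r, a + 1 + (j - 1) < x := by
        intro x hx
        have := hrlt x hx
        omega
      rw [heq, vfun_decomp hrlt2]
      have : j - 1 + 1 = j := by omega
      rw [this]
    -- assemble
    have hsubS : ∀ i, i < j → s.filter (fun x => a + (i + 1) < x) ⊂ s := by
      intro i hij
      rw [Finset.ssubset_iff_of_subset (Finset.filter_subset _ _)]
      refine ⟨a, hams, ?_⟩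
      simp only [Finset.mem_filter, not_and]
      intro _
      omega
    have hsubE : s.erase a ⊂ s := Finset.erase_ssubset hams
    calc usum s = ∑ i ∈ Finset.range (j + 1),
          ∑ t ∈ s.powerset.filter (fun t => φ t = i), gfun t := hfib
      _ = (∑ i ∈ Finset.range j,
            ∑ t ∈ s.powerset.filter (fun t => φ t = i + 1), gfun t)
          + ∑ t ∈ s.powerset.filter (fun t => φ t = 0), gfun t := Finset.sum_range_succ' _ j
      _ = (∑ i ∈ Finset.range j, fseq (i + 1) * (-fseq (j - i - 2 + 1) * vfun r))
          + (-fseq j * vfun r) := by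
          congr 1
          · apply Finset.sum_congr rfl
            intro i hi
            rw [Finset.mem_range] at hi
            rw [hfibS i hi, ih _ (hsubS i hi), hvtrunc i hi]
          · rw [hfib0]
            show usum (s.erase a) = -fseq j * vfun r
            rw [ih _ hsubE, herase]
      _ = (-fseq j + ∑ i ∈ Finset.range j, fseq (i + 1) * (-fseq (j - i - 2 + 1))) * vfun r := by
          rw [add_mul, Finset.sum_mul, add_comm]
          congr 1
          apply Finset.sum_congr rfl
          intro i _
          ring
      _ = -fseq (j + 1) * vfun r := by rw [coeff_sum hj1]
      _ = vfun s := by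
          conv_rhs => rw [hdec]
          rw [vfun_decomp hrlt]

lemma walk_between {n : ℕ} {s : Finset (Fin n)}
    {u v : (↑s : Set (Fin n))}
    (p : ((SimpleGraph.pathGraph n).induce (↑s : Set (Fin n))).Walk u v) :
    ∀ x : Fin n, min u.1.1 v.1.1 ≤ x.1 → x.1 ≤ max u.1.1 v.1.1 → x ∈ s := by
  induction p with
  | nil =>
    rename_i a
    intro x h1 h2
    have hx : x = a.1 := Fin.ext (by omega)
    rw [hx]
    exact a.2
  | cons h p ih =>
    rename_i a b c
    intro x h1 h2
    have hadj : (SimpleGraph.pathGraph n).Adj a.1 b.1 := h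
    rw [SimpleGraph.pathGraph_adj] at hadj
    by_cases hx : x.1 = a.1.1
    · have hxa : x = a.1 := Fin.ext hx
      rw [hxa]
      exact a.2
    · exact ih x (by omega) (by omega)

lemma reachable_of_between {n : ℕ} {s : Finset (Fin n)} :
    ∀ (d : ℕ) (u v : (↑s : Set (Fin n))), v.1.1 = u.1.1 + d →
    (∀ x : Fin n, u.1.1 ≤ x.1 → x.1 ≤ v.1.1 → x ∈ s) →
    ((SimpleGraph.pathGraph n).induce (↑s : Set (Fin n))).Reachable u v := by
  intro d
  induction d with
  | zero =>
    intro u v hd _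
    have : u = v := Subtype.ext (Fin.ext (by omega))
    rw [this]
  | succ d ih =>
    intro u v hd hall
    have hlt : u.1.1 + 1 < n := by
      have := v.1.2
      omega
    have hu's : (⟨u.1.1 + 1, hlt⟩ : Fin n) ∈ s := hall ⟨u.1.1 + 1, hlt⟩ (by simp) (by show u.1.1 + 1 ≤ v.1.1; omega)
    set u' : (↑s : Set (Fin n)) := ⟨⟨u.1.1 + 1, hlt⟩, hu's⟩ with hu'
    have hadj : ((SimpleGraph.pathGraph n).induce (↑s : Set (Fin n))).Adj u u' := by
      show (SimpleGraph.pathGraph n).Adj u.1 u'.1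
      rw [SimpleGraph.pathGraph_adj]
      left
      rfl
    refine hadj.reachable.trans (ih u' v (by simp [hu']; omega) ?_)
    intro x hx1 hx2
    refine hall x ?_ hx2
    simp only [hu'] at hx1
    omega

lemma reachable_iff {n : ℕ} {s : Finset (Fin n)} (u v : (↑s : Set (Fin n))) :
    ((SimpleGraph.pathGraph n).induce (↑s : Set (Fin n))).Reachable u v ↔
      ∀ x : Fin n, min u.1.1 v.1.1 ≤ x.1 → x.1 ≤ max u.1.1 v.1.1 → x ∈ s := by
  constructor
  · rintro ⟨p⟩
    exact walk_between p
  · intro hall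
    rcases le_total u.1.1 v.1.1 with h | h
    · exact reachable_of_between (v.1.1 - u.1.1) u v (by omega)
        (fun x h1 h2 => hall x (by omega) (by omega))
    · exact (reachable_of_between (u.1.1 - v.1.1) v u (by omega)
        (fun x h1 h2 => hall x (by omega) (by omega))).symm

lemma supp_card {n : ℕ} {s : Finset (Fin n)} (v : (↑s : Set (Fin n))) :
    Nat.card (((SimpleGraph.pathGraph n).induce (↑s : Set (Fin n))).connectedComponentMk v).supp
      = (runOf (s.map Fin.valEmbedding) v.1.1).card := by
  classical
  set R : Finset (Fin n) := s.filter
    (fun u => ∀ x : Fin n, min u.1 v.1.1 ≤ x.1 → x.1 ≤ max u.1 v.1.1 → x ∈ s) with hR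
  have hsupp : (((SimpleGraph.pathGraph n).induce (↑s : Set (Fin n))).connectedComponentMk v).supp
      = {u : (↑s : Set (Fin n)) | u.1 ∈ R} := by
    ext u
    rw [SimpleGraph.ConnectedComponent.mem_supp_iff, SimpleGraph.ConnectedComponent.eq]
    rw [reachable_iff u v]
    simp only [Set.mem_setOf_eq, hR, Finset.mem_filter]
    constructor
    · intro h
      exact ⟨u.2, h⟩
    · intro h
      exact h.2
  rw [hsupp]
  have e : {u : (↑s : Set (Fin n)) // u.1 ∈ R} ≃ {x : Fin n // x ∈ R} :=
    { toFun := fun u => ⟨u.1.1, u.2⟩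
      invFun := fun x => ⟨⟨x.1, by
        have := Finset.mem_filter.1 x.2
        exact this.1⟩, x.2⟩
      left_inv := fun u => by ext; rfl
      right_inv := fun x => by ext; rfl }
  have h1 : Nat.card {u : (↑s : Set (Fin n)) // u.1 ∈ R} = R.card := by
    rw [Nat.card_congr e, Nat.card_eq_fintype_card, Fintype.card_coe]
  have h2 : runOf (s.map Fin.valEmbedding) v.1.1 = R.map Fin.valEmbedding := by
    rw [runOf, Finset.filter_map]
    rw [hR]
    congr 1
    apply Finset.filter_congr
    intro u hu
    simp only [Function.comp, Fin.valEmbedding_apply]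
    constructor
    · intro h x hx1 hx2
      have hw := h x.1 (by rw [Finset.mem_Icc]; omega)
      rw [Finset.mem_map] at hw
      obtain ⟨y, hy, hyx⟩ := hw
      have : y = x := Fin.ext (by simpa using hyx)
      rwa [← this]
    · intro h w hw
      rw [Finset.mem_Icc] at hw
      have hwn : w < n := by
        have := v.1.2
        have := u.2
        omega
      have := h ⟨w, hwn⟩ (by simp; omega) (by simp; omega)
      rw [Finset.mem_map]
      exact ⟨⟨w, hwn⟩, this, rfl⟩
  rw [h2, Finset.card_map, ← h1]
  rfl

lemma isOdd_iff {n : ℕ} (s : Finset (Fin n)) :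
    ((SimpleGraph.pathGraph n).induce (↑s : Set (Fin n))).IsOddGraph ↔
      allOdd (s.map Fin.valEmbedding) := by
  constructor
  · intro h v hv
    rw [Finset.mem_map] at hv
    obtain ⟨u, hu, rfl⟩ := hv
    have := h (((SimpleGraph.pathGraph n).induce (↑s : Set (Fin n))).connectedComponentMk
      ⟨u, hu⟩)
    rwa [supp_card] at this
  · intro h c
    obtain ⟨v, rfl⟩ := c.exists_rep
    have hx := h v.1.1 (Finset.mem_map.2 ⟨v.1, v.2, rfl⟩)
    rw [← supp_card (s := s) v] at hx
    exact hx

-- now the real content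
lemma vfun_eq_zero {s : Finset ℕ} (hne : s.Nonempty) (h : allOdd s) : vfun s = 0 := by
  set a := s.min' hne with ha
  set j := runLen s a with hj
  set r := s.filter (fun x => a + j < x) with hrdef
  have hrlt : ∀ x ∈ r, a + j < x := fun x hx => (Finset.mem_filter.1 hx).2
  have hdec : s = Finset.Ico a (a + j) ∪ r := min_decomp s hne
  have hj1 : 1 ≤ j := hj ▸ runLen_pos (s.min'_mem hne)
  have hodd : Odd j := by
    have hv := h a (s.min'_mem hne)
    have heq : runOf s a = Finset.Ico a (a + j) := by
      conv_lhs => rw [hdec]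
      exact runOf_head hrlt (Finset.mem_Ico.2 ⟨le_refl a, by omega⟩)
    rw [heq, Nat.card_Ico] at hv
    have hsimp : a + j - a = j := by omega
    rwa [hsimp] at hv
  have hnotodd : ¬ Odd (j + 1) := by
    rw [Nat.odd_iff] at hodd ⊢
    omega
  conv_lhs => rw [hdec]
  rw [vfun_decomp hrlt, fseq_even hnotodd]
  ring

lemma map_emb_powerset_sum {n : ℕ} (s : Finset (Fin n)) :
    ∑ t ∈ s.powerset.erase s, gfun (t.map Fin.valEmbedding)
      = ∑ u ∈ (s.map Fin.valEmbedding).powerset.erase (s.map Fin.valEmbedding), gfun u := by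
  have hback : ∀ u : Finset ℕ, u ⊆ s.map Fin.valEmbedding →
      (s.filter (fun x => x.val ∈ u)).map Fin.valEmbedding = u := by
    intro u hu
    ext w
    simp only [Finset.mem_map, Finset.mem_filter, Fin.valEmbedding_apply]
    constructor
    · rintro ⟨x, ⟨hxs, hxu⟩, rfl⟩
      exact hxu
    · intro hw
      obtain ⟨y, hys, hyw⟩ := Finset.mem_map.1 (hu hw)
      simp only [Fin.valEmbedding_apply] at hyw
      exact ⟨y, ⟨hys, by rwa [hyw]⟩, hyw⟩
  have hfwd : ∀ t : Finset (Fin n), t ⊆ s →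
      s.filter (fun x => x.val ∈ t.map Fin.valEmbedding) = t := by
    intro t ht
    ext x
    simp only [Finset.mem_filter, Finset.mem_map, Fin.valEmbedding_apply]
    constructor
    · rintro ⟨hxs, y, hyt, hyx⟩
      have : y = x := Fin.ext hyx
      rwa [← this]
    · intro hx
      exact ⟨ht hx, x, hx, rfl⟩
  refine Finset.sum_nbij' (fun t => t.map Fin.valEmbedding)
    (fun u => s.filter (fun x => x.val ∈ u)) ?_ ?_ ?_ ?_ ?_
  · intro t ht
    rw [Finset.mem_erase, Finset.mem_powerset] at ht ⊢
    refine ⟨fun hc => ht.1 (Finset.map_injective _ hc), Finset.map_subset_map.2 ht.2⟩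
  · intro u hu
    rw [Finset.mem_erase, Finset.mem_powerset] at hu ⊢
    refine ⟨fun hc => hu.1 ?_, Finset.filter_subset _ _⟩
    rw [← hback u hu.2]
    exact congrArg (Finset.map Fin.valEmbedding) hc
  · intro t ht
    rw [Finset.mem_erase, Finset.mem_powerset] at ht
    exact hfwd t ht.2
  · intro u hu
    rw [Finset.mem_erase, Finset.mem_powerset] at hu
    exact hback u hu.2
  · intro t _
    rfl

lemma bNum_eq_gfun {n : ℕ} : ∀ s : Finset (Fin n),
    bNum (SimpleGraph.pathGraph n) s = gfun (s.map Fin.valEmbedding) := by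
  intro s
  induction s using Finset.strongInduction with
  | _ s ih =>
    rcases eq_or_ne s ∅ with rfl | hne
    · rw [bNum]
      simp [gfun_empty]
    by_cases hodd : ((SimpleGraph.pathGraph n).induce (↑s : Set (Fin n))).IsOddGraph
    · rw [bNum, if_neg hne, if_pos hodd]
      rw [Finset.sum_attach _ (bNum (SimpleGraph.pathGraph n))]
      have key : -∑ t ∈ s.powerset.erase s, bNum (SimpleGraph.pathGraph n) t
          = gfun (s.map Fin.valEmbedding) := by
        have hsum : ∑ t ∈ s.powerset.erase s, bNum (SimpleGraph.pathGraph n) t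
            = ∑ t ∈ s.powerset.erase s, gfun (t.map Fin.valEmbedding) := by
          apply Finset.sum_congr rfl
          intro t ht
          rw [Finset.mem_erase, Finset.mem_powerset] at ht
          exact ih t (lt_of_le_of_ne ht.2 ht.1)
        rw [hsum, map_emb_powerset_sum]
        have hkey : ∑ u ∈ (s.map Fin.valEmbedding).powerset.erase (s.map Fin.valEmbedding), gfun u
              + gfun (s.map Fin.valEmbedding) = usum (s.map Fin.valEmbedding) :=
          Finset.sum_erase_add _ _ (Finset.mem_powerset_self _)
        have hzero : usum (s.map Fin.valEmbedding) = 0 := by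
          rw [usum_eq_vfun]
          refine vfun_eq_zero ?_ ((isOdd_iff s).1 hodd)
          obtain ⟨x, hx⟩ := Finset.nonempty_iff_ne_empty.2 hne
          exact ⟨x.1, Finset.mem_map.2 ⟨x, hx, rfl⟩⟩
        rw [hzero] at hkey
        linarith
      rw [← key]
      congr 1
      refine Finset.sum_congr ?_ (fun _ _ => rfl)
      ext t
      simp only [Finset.mem_filter, Finset.mem_erase, Finset.mem_powerset]
      tauto
    · rw [bNum, if_neg hne, if_neg hodd]
      rw [isOdd_iff] at hodd
      exact (gfun_eq_zero _ hodd).symm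


/-- for odd `n`, `b(P_n) = (-1)^{(n+1)/2} ⬝ Cat((n-1)/2)`. -/
theorem bNumber_pathGraph (n : ℕ) (hn : Odd n) :
    bNumber (SimpleGraph.pathGraph n)
      = (-1) ^ ((n + 1) / 2) * (catalan ((n - 1) / 2) : ℤ) := by
  have hn1 : 1 ≤ n := hn.pos
  rw [bNumber, bNum_eq_gfun]
  have h1 : (Finset.univ : Finset (Fin n)).map Fin.valEmbedding
      = Finset.Ico 0 (0 + n) ∪ (∅ : Finset ℕ) := by
    rw [Fin.map_valEmbedding_univ, Finset.union_empty, zero_add]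
    ext x
    simp
  rw [h1, gfun_decomp (fun x hx => absurd hx (Finset.notMem_empty x)) hn1, gfun_empty, mul_one]
  rw [fseq, if_pos hn]
end

section
/- For an odd integer n, the b-number of the complete graph K_n satisfies b(K_n) = (-1)^{(n+1)/2} · A_n, where A_n is the n-th Euler zigzag number defined by sec x + tan x = ∑ A_k x^k / k!. -/
open scoped Classical

/-- The `k`-th Euler zigzag number `A_k`: the number of alternating (up-down)
permutations of `Fin k`, whose exponential generating function is
`sec x + tan x`. -/
noncomputable def eulerZigzag (k : ℕ) : ℕ :=
  Nat.card {σ : Equiv.Perm (Fin k) //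
    ∀ i : ℕ, ∀ h : i + 1 < k,
      if i % 2 = 0 then σ ⟨i, Nat.lt_of_succ_lt h⟩ < σ ⟨i + 1, h⟩
      else σ ⟨i + 1, h⟩ < σ ⟨i, Nat.lt_of_succ_lt h⟩}


namespace BAux

open Finset

/-! ### The abstract recursion -/

noncomputable def fNum : ℕ → ℤ
  | m =>
    if m = 0 then 1
    else if Odd m then - ∑ k ∈ (Finset.range m).attach, (m.choose k.1 : ℤ) * fNum k.1
    else 0
termination_by m => m
decreasing_by exact Finset.mem_range.mp k.2

lemma fNum_zero : fNum 0 = 1 := by rw [fNum]; simp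

lemma fNum_even {m : ℕ} (h0 : m ≠ 0) (hm : ¬ Odd m) : fNum m = 0 := by
  rw [fNum]; simp [h0, hm]

lemma fNum_odd {m : ℕ} (h0 : m ≠ 0) (hm : Odd m) :
    fNum m = - ∑ k ∈ Finset.range m, (m.choose k : ℤ) * fNum k := by
  rw [fNum]
  simp only [h0, hm, if_false, if_true]
  rw [Finset.sum_attach (Finset.range m) (fun k => (m.choose k : ℤ) * fNum k)]

lemma induce_complete_eq_top {V : Type*} (s : Set V) :
    (SimpleGraph.completeGraph V).induce s = (⊤ : SimpleGraph s) := by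
  ext a b
  simp only [SimpleGraph.comap_adj, SimpleGraph.completeGraph_eq_top, SimpleGraph.top_adj]
  exact Subtype.coe_injective.ne_iff

lemma isOddGraph_induce_complete {V : Type*} (s : Finset V) (hs : s.Nonempty) :
    ((SimpleGraph.completeGraph V).induce (↑s : Set V)).IsOddGraph ↔ Odd s.card := by
  obtain ⟨x, hx⟩ := hs
  have hne : Nonempty ↥(↑s : Set V) := ⟨⟨x, by simpa using hx⟩⟩
  have hcard : ∀ c : (⊤ : SimpleGraph ↥(↑s : Set V)).ConnectedComponent,
      Nat.card c.supp = s.card := by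
    intro c
    rw [SimpleGraph.ConnectedComponent.top_supp_eq_univ, Nat.card_coe_set_eq,
      Set.ncard_univ, Nat.card_coe_set_eq, Set.ncard_coe_finset]
  rw [induce_complete_eq_top]
  constructor
  · intro h
    have := h ((⊤ : SimpleGraph ↥(↑s : Set V)).connectedComponentMk (Classical.arbitrary _))
    rwa [hcard] at this
  · intro h c
    rw [hcard]; exact h

lemma sum_proper_powerset {V : Type*} (s : Finset V) (h : ℕ → ℤ) :
    ∑ t ∈ s.powerset.filter (· ≠ s), h t.card
      = ∑ k ∈ Finset.range s.card, (s.card.choose k : ℤ) * h k := by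
  rw [← Finset.sum_fiberwise_of_maps_to (g := Finset.card)
      (t := Finset.range (s.card + 1)) (fun t ht => by
        simp only [Finset.mem_filter, Finset.mem_powerset] at ht
        exact Finset.mem_range.mpr (Nat.lt_succ_of_le (Finset.card_le_card ht.1)))]
  rw [Finset.sum_range_succ]
  have hlast : (s.powerset.filter (· ≠ s)).filter (fun t => t.card = s.card) = ∅ := by
    ext t
    simp only [Finset.mem_filter, Finset.mem_powerset, Finset.notMem_empty, iff_false]
    rintro ⟨⟨hsub, hne⟩, hc⟩
    exact hne (Finset.eq_of_subset_of_card_le hsub (le_of_eq hc.symm))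
  rw [hlast]
  simp only [Finset.sum_empty, add_zero]
  refine Finset.sum_congr rfl (fun k hk => ?_)
  have hk' := Finset.mem_range.mp hk
  have hfib : (s.powerset.filter (· ≠ s)).filter (fun t => t.card = k) = s.powersetCard k := by
    ext t
    simp only [Finset.mem_filter, Finset.mem_powerset, Finset.mem_powersetCard]
    constructor
    · rintro ⟨⟨hsub, _⟩, hc⟩; exact ⟨hsub, hc⟩
    · rintro ⟨hsub, hc⟩
      exact ⟨⟨hsub, fun he => by subst he; omega⟩, hc⟩
  calc ∑ t ∈ (s.powerset.filter (· ≠ s)).filter (fun t => t.card = k), h t.card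
      = ∑ t ∈ (s.powerset.filter (· ≠ s)).filter (fun t => t.card = k), h k := by
        refine Finset.sum_congr rfl (fun t ht => ?_)
        rw [(Finset.mem_filter.mp ht).2]
    _ = (s.powersetCard k).card • h k := by rw [hfib, Finset.sum_const]
    _ = (s.card.choose k : ℤ) * h k := by
        rw [Finset.card_powersetCard, nsmul_eq_mul]

lemma bNum_complete {V : Type*} (s : Finset V) :
    bNum (SimpleGraph.completeGraph V) s = fNum s.card := by
  induction s using Finset.strongInduction with
  | _ s ih =>
    rcases eq_or_ne s ∅ with rfl | hs
    · rw [bNum]; simp [fNum_zero]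
    · have hs0 : s.card ≠ 0 := by simpa using hs
      by_cases hodd : Odd s.card
      · rw [bNum, if_neg hs,
          if_pos ((isOddGraph_induce_complete s (Finset.nonempty_of_ne_empty hs)).mpr hodd),
          fNum_odd hs0 hodd]
        rw [Finset.sum_attach]
        congr 1
        rw [← sum_proper_powerset s fNum]
        refine Finset.sum_congr rfl (fun t ht => ?_)
        simp only [Finset.mem_filter, Finset.mem_powerset] at ht
        exact ih t (lt_of_le_of_ne ht.1 ht.2)
      · rw [bNum, if_neg hs,
          if_neg (fun h => hodd ((isOddGraph_induce_complete s
            (Finset.nonempty_of_ne_empty hs)).mp h)),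
          fNum_even hs0 hodd]

/-! ### Part B : the combinatorial identity -/

def PermAlt {k : ℕ} (σ : Equiv.Perm (Fin k)) : Prop :=
  ∀ i : ℕ, ∀ h : i + 1 < k,
    if i % 2 = 0 then σ ⟨i, Nat.lt_of_succ_lt h⟩ < σ ⟨i + 1, h⟩
    else σ ⟨i + 1, h⟩ < σ ⟨i, Nat.lt_of_succ_lt h⟩

lemma eulerZigzag_eq_card (k : ℕ) :
    eulerZigzag k = (Finset.univ.filter (fun σ : Equiv.Perm (Fin k) => PermAlt σ)).card := by
  rw [eulerZigzag, Nat.card_eq_fintype_card]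
  exact Fintype.card_subtype _

def AltL {m : ℕ} (v : List (Fin m)) : Prop :=
  ∀ i : ℕ, ∀ h : i + 1 < v.length,
    if i % 2 = 0 then v[i]'(Nat.lt_of_succ_lt h) < v[i+1]'h
    else v[i+1]'h < v[i]'(Nat.lt_of_succ_lt h)

noncomputable def Objs (m : ℕ) : Finset (List (Fin m)) :=
  ((Finset.univ : Finset {l : List (Fin m) // l.Nodup}).image Subtype.val).filter
    (fun v => Odd v.length ∧ AltL v)

lemma mem_Objs {m : ℕ} {v : List (Fin m)} :
    v ∈ Objs m ↔ v.Nodup ∧ Odd v.length ∧ AltL v := by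
  simp only [Objs, Finset.mem_filter, Finset.mem_image, Finset.mem_univ, true_and]
  constructor
  · rintro ⟨⟨w, rfl⟩, h⟩; exact ⟨w.2, h⟩
  · rintro ⟨h1, h2⟩; exact ⟨⟨⟨v, h1⟩, rfl⟩, h2⟩

lemma toFinset_ofFn_orderEmb {m k : ℕ} (s : Finset (Fin m)) (h : s.card = k)
    (σ : Equiv.Perm (Fin k)) :
    (List.ofFn (fun i => s.orderEmbOfFin h (σ i))).toFinset = s := by
  ext x
  simp only [List.mem_toFinset, List.mem_ofFn, Set.mem_range]
  constructor
  · rintro ⟨i, rfl⟩; exact s.orderEmbOfFin_mem h (σ i)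
  · intro hx
    have : x ∈ Set.range (s.orderEmbOfFin h) := by
      rw [Finset.range_orderEmbOfFin]; exact hx
    obtain ⟨j, rfl⟩ := this
    exact ⟨σ.symm j, by simp⟩

lemma card_fiber (m k : ℕ) (hk : Odd k) :
    ((Objs m).filter (fun v => v.length = k)).card = m.choose k * eulerZigzag k := by
  rw [eulerZigzag_eq_card]
  have h1 : m.choose k = ((Finset.univ : Finset (Fin m)).powersetCard k).card := by
    rw [Finset.card_powersetCard, Finset.card_univ, Fintype.card_fin]
  rw [h1, ← Finset.card_product]
  have hcard : ∀ p : Finset (Fin m) × Equiv.Perm (Fin k),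
      p ∈ ((Finset.univ : Finset (Fin m)).powersetCard k) ×ˢ
        (Finset.univ.filter (fun σ : Equiv.Perm (Fin k) => PermAlt σ)) → p.1.card = k := by
    intro p hp
    exact ((Finset.mem_powersetCard.mp (Finset.mem_product.mp hp).1).2)
  refine (Finset.card_bij
    (fun p hp => List.ofFn (fun i : Fin k => p.1.orderEmbOfFin (hcard p hp) (p.2 i)))
    ?_ ?_ ?_).symm
  · -- maps to
    rintro ⟨s, σ⟩ hp
    have hs := hcard _ hp
    have hσ : PermAlt σ := by
      have := (Finset.mem_product.mp hp).2
      simpa using (Finset.mem_filter.mp this).2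
    rw [Finset.mem_filter, mem_Objs]
    refine ⟨⟨?_, ?_, ?_⟩, by simp⟩
    · exact List.nodup_ofFn.mpr ((s.orderEmbOfFin hs).injective.comp σ.injective)
    · simpa using hk
    · intro i h
      simp only [List.length_ofFn] at h
      simp only [List.getElem_ofFn]
      by_cases hi : i % 2 = 0 <;>
        simp only [hi, if_true, if_false, OrderEmbedding.lt_iff_lt] <;>
      · have := hσ i h
        simp only [hi, if_true, if_false] at this
        exact this
  · -- injective
    rintro ⟨s₁, σ₁⟩ h₁ ⟨s₂, σ₂⟩ h₂ heq
    have hs : s₁ = s₂ := by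
      have := congrArg List.toFinset heq
      rwa [toFinset_ofFn_orderEmb, toFinset_ofFn_orderEmb] at this
    subst hs
    have hfun := List.ofFn_injective heq
    have hσ : σ₁ = σ₂ := by
      ext i
      exact congrArg Fin.val ((s₁.orderEmbOfFin (hcard _ h₁)).injective (congrFun hfun i))
    rw [hσ]
  · -- surjective
    intro v hv
    rw [Finset.mem_filter, mem_Objs] at hv
    obtain ⟨⟨hnd, hodd, halt⟩, hlen⟩ := hv
    subst hlen
    have hc : v.toFinset.card = v.length := List.toFinset_card_of_nodup hnd
    have hget_inj : Function.Injective (fun i : Fin v.length => v[(i : ℕ)]) :=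
      List.nodup_iff_injective_get.mp hnd
    have hmem : ∀ i : Fin v.length, v[(i : ℕ)] ∈ v.toFinset := by
      intro i; rw [List.mem_toFinset]; exact List.getElem_mem _
    set φ : Fin v.length → Fin v.length :=
      fun i => (v.toFinset.orderIsoOfFin hc).symm ⟨v[(i : ℕ)], hmem i⟩ with hφ
    have hφinj : Function.Injective φ := by
      intro i j hij
      apply hget_inj
      have := (v.toFinset.orderIsoOfFin hc).symm.injective hij
      exact congrArg Subtype.val this
    set σ : Equiv.Perm (Fin v.length) :=
      Equiv.ofBijective φ (Finite.injective_iff_bijective.mp hφinj) with hσdef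
    have hσapp : ∀ i, σ i = φ i := fun i => rfl
    have hσlt : ∀ i j : Fin v.length, σ i < σ j ↔ v[(i:ℕ)] < v[(j:ℕ)] := by
      intro i j
      rw [hσapp, hσapp, hφ]
      simp only [OrderIso.lt_iff_lt, Subtype.mk_lt_mk]
    refine ⟨⟨v.toFinset, σ⟩, ?_, ?_⟩
    · rw [Finset.mem_product]
      constructor
      · simp [Finset.mem_powersetCard, hc]
      · rw [Finset.mem_filter]
        refine ⟨Finset.mem_univ _, ?_⟩
        intro i h
        by_cases hi : i % 2 = 0 <;>
          simp only [hi, if_true, if_false, hσlt] <;>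
        · have := halt i h
          simp only [hi, if_true, if_false] at this
          exact this
    · apply List.ext_getElem
      · simp
      · intro i h₁ h₂
        simp only [List.getElem_ofFn]
        have : v.toFinset.orderEmbOfFin hc (σ ⟨i, by simpa using h₁⟩)
            = ((v.toFinset.orderIsoOfFin hc) (σ ⟨i, by simpa using h₁⟩) : Fin m) := by
          rw [Finset.coe_orderIsoOfFin_apply]
        rw [this, hσapp, hφ]
        simp

lemma altL_nil {m : ℕ} : AltL ([] : List (Fin m)) := by intro i h; simp at h

lemma altL_single {m : ℕ} (a : Fin m) : AltL [a] := by intro i h; simp at h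

lemma altL_cons₂ {m : ℕ} {a b : Fin m} {t : List (Fin m)} :
    AltL (a :: b :: t) ↔ a < b ∧ (∀ h : 0 < t.length, t[0] < b) ∧ AltL t := by
  constructor
  · intro H
    refine ⟨?_, ?_, ?_⟩
    · have := H 0 (by simp)
      simpa using this
    · intro h
      have := H 1 (by simp; omega)
      simpa using this
    · intro i hi
      have := H (i + 2) (by simp; omega)
      have hmod : (i + 2) % 2 = i % 2 := by omega
      rw [hmod] at this
      by_cases hp : i % 2 = 0 <;> simp only [hp, if_true, if_false] at this ⊢ <;>
        simpa using this
  · rintro ⟨h1, h2, h3⟩ i hi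
    match i with
    | 0 => simpa using h1
    | 1 =>
      simp only [List.length_cons] at hi
      have h0 : 0 < t.length := by omega
      simp only [Nat.reduceMod, if_false]
      simpa using h2 h0
    | (i + 2) =>
      simp only [List.length_cons] at hi
      have := h3 i (by omega)
      have hmod : (i + 2) % 2 = i % 2 := by omega
      rw [hmod]
      by_cases hp : i % 2 = 0 <;> simp only [hp, if_true, if_false] at this ⊢ <;>
        simpa using this

noncomputable def cmpl {m : ℕ} (v : List (Fin m)) : Finset (Fin m) :=
  Finset.univ \ v.toFinset

lemma mem_cmpl {m : ℕ} {v : List (Fin m)} {x : Fin m} : x ∈ cmpl v ↔ x ∉ v := by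
  simp [cmpl, List.mem_toFinset]

lemma card_cmpl {m : ℕ} {v : List (Fin m)} (h : v.Nodup) :
    (cmpl v).card = m - v.length := by
  rw [cmpl, Finset.card_sdiff_of_subset (Finset.subset_univ _), Finset.card_univ, Fintype.card_fin,
    List.toFinset_card_of_nodup h]

lemma cmpl_cons₂ {m : ℕ} (c b : Fin m) (w : List (Fin m)) :
    cmpl (c :: b :: w) = ((cmpl w).erase b).erase c := by
  rw [cmpl, cmpl, List.toFinset_cons, List.toFinset_cons, Finset.sdiff_insert,
    Finset.sdiff_insert]

noncomputable def gmap {m : ℕ} : List (Fin m) → List (Fin m)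
  | [] => []
  | a :: t =>
      if 2 ≤ (cmpl (a :: t)).card ∧ (↑a : WithBot (Fin m)) < (cmpl (a :: t)).max then
        WithBot.unbotD a ((cmpl (a :: t)).erase (WithBot.unbotD a (cmpl (a :: t)).max)).max ::
          WithBot.unbotD a (cmpl (a :: t)).max :: a :: t
      else t.drop 1

lemma max_eq_coe {m : ℕ} {s : Finset (Fin m)} {b : Fin m} (hb : b ∈ s)
    (hub : ∀ x ∈ s, x ≤ b) : s.max = ↑b :=
  le_antisymm (Finset.max_le (fun x hx => WithBot.coe_le_coe.mpr (hub x hx))) (Finset.le_max hb)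

lemma exists_gt_of_lt_max {m : ℕ} {s : Finset (Fin m)} {a : Fin m}
    (h : (↑a : WithBot (Fin m)) < s.max) : ∃ y ∈ s, a < y := by
  rcases s.eq_empty_or_nonempty with rfl | hs
  · rw [Finset.max_empty] at h
    exact absurd h (by simp)
  · exact ⟨s.max' hs, s.max'_mem hs, by rwa [← Finset.coe_max' hs, WithBot.coe_lt_coe] at h⟩

lemma gmap_extend {m : ℕ} {a b c : Fin m} {t : List (Fin m)}
    (h2 : 2 ≤ (cmpl (a :: t)).card)
    (hb : (cmpl (a :: t)).max = ↑b)
    (hc : ((cmpl (a :: t)).erase b).max = ↑c)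
    (hab : a < b) :
    gmap (a :: t) = c :: b :: a :: t := by
  rw [gmap, if_pos ⟨h2, by rw [hb]; exact WithBot.coe_lt_coe.mpr hab⟩, hb,
    WithBot.unbotD_coe, hc, WithBot.unbotD_coe]

lemma gmap_shorten {m : ℕ} {a : Fin m} {t : List (Fin m)}
    (h : ¬ (2 ≤ (cmpl (a :: t)).card ∧ (↑a : WithBot (Fin m)) < (cmpl (a :: t)).max)) :
    gmap (a :: t) = t.drop 1 := by
  rw [gmap, if_neg h]

noncomputable def vfix (m : ℕ) (h0 : 0 < m) : List (Fin m) := [⟨m - 1, by omega⟩]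

lemma fin_le_top {m : ℕ} (h0 : 0 < m) (x : Fin m) : x ≤ ⟨m - 1, by omega⟩ := by
  rw [Fin.le_def]
  exact Nat.le_pred_of_lt x.isLt

lemma vfix_mem_Objs {m : ℕ} (h0 : 0 < m) : vfix m h0 ∈ Objs m :=
  mem_Objs.mpr ⟨List.nodup_singleton _, by rw [vfix]; simp, altL_single _⟩

lemma gmap_spec {m : ℕ} (hm : Odd m) (h0 : 0 < m) {v : List (Fin m)} (hv : v ∈ Objs m)
    (hne : v ≠ vfix m h0) :
    gmap v ∈ Objs m ∧ gmap v ≠ vfix m h0 ∧ gmap (gmap v) = v ∧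
      ((gmap v).length = v.length + 2 ∨ v.length = (gmap v).length + 2) := by
  obtain ⟨hnd, hodd, halt⟩ := mem_Objs.mp hv
  obtain ⟨a, t, rfl⟩ : ∃ a t, v = a :: t := by
    cases v with
    | nil => simp at hodd
    | cons a t => exact ⟨a, t, rfl⟩
  have hCcard : (cmpl (a :: t)).card = m - (a :: t).length := card_cmpl hnd
  have hCeven : Even (cmpl (a :: t)).card := by
    rw [hCcard]; exact Nat.Odd.sub_odd hm hodd
  by_cases hcase : ∃ x ∈ cmpl (a :: t), a < x
  · -- extend case
    obtain ⟨x, hxC, hax⟩ := hcase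
    have hCne : (cmpl (a :: t)).Nonempty := ⟨x, hxC⟩
    have h2 : 2 ≤ (cmpl (a :: t)).card := by
      obtain ⟨r, hr⟩ := hCeven
      have := Finset.card_pos.mpr hCne
      omega
    set b := (cmpl (a :: t)).max' hCne with hbdef
    have hbC : b ∈ cmpl (a :: t) := Finset.max'_mem _ _
    have hbub : ∀ y ∈ cmpl (a :: t), y ≤ b := fun y hy => Finset.le_max' _ _ hy
    have hab : a < b := lt_of_lt_of_le hax (hbub x hxC)
    have hEne : ((cmpl (a :: t)).erase b).Nonempty := by
      rw [← Finset.card_pos, Finset.card_erase_of_mem hbC]; omega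
    set c := ((cmpl (a :: t)).erase b).max' hEne with hcdef
    have hcE : c ∈ (cmpl (a :: t)).erase b := Finset.max'_mem _ _
    have hcub : ∀ y ∈ (cmpl (a :: t)).erase b, y ≤ c := fun y hy => Finset.le_max' _ _ hy
    have hcC : c ∈ cmpl (a :: t) := Finset.mem_of_mem_erase hcE
    have hcb : c < b := lt_of_le_of_ne (hbub c hcC) (Finset.ne_of_mem_erase hcE)
    have hbmax : (cmpl (a :: t)).max = ↑b := max_eq_coe hbC hbub
    have hcmax : ((cmpl (a :: t)).erase b).max = ↑c := max_eq_coe hcE hcub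
    have hg : gmap (a :: t) = c :: b :: a :: t := gmap_extend h2 hbmax hcmax hab
    have hbnotin : b ∉ a :: t := mem_cmpl.mp hbC
    have hcnotin : c ∉ a :: t := mem_cmpl.mp hcC
    have hnewmem : gmap (a :: t) ∈ Objs m := by
      rw [hg, mem_Objs]
      refine ⟨?_, ?_, ?_⟩
      · rw [List.nodup_cons, List.nodup_cons]
        refine ⟨?_, hbnotin, hnd⟩
        intro hmem
        rcases List.mem_cons.mp hmem with hcb' | h
        · exact Finset.ne_of_mem_erase hcE hcb'
        · exact hcnotin h
      · obtain ⟨r, hr⟩ := hodd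
        simp only [List.length_cons] at hr ⊢
        exact ⟨r + 1, by omega⟩
      · refine altL_cons₂.mpr ⟨hcb, ?_, halt⟩
        intro h
        simpa using hab
    refine ⟨hnewmem, ?_, ?_, ?_⟩
    · intro h
      have := congrArg List.length h
      rw [hg] at this
      simp [vfix] at this
    · rw [hg, gmap_shorten, List.drop_one, List.tail_cons]
      rintro ⟨h2', hlt'⟩
      rw [cmpl_cons₂] at hlt'
      have hle : (((cmpl (a :: t)).erase b).erase c).max ≤ ((cmpl (a :: t)).erase b).max :=
        Finset.max_mono (Finset.erase_subset _ _)
      rw [hcmax] at hle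
      exact absurd (lt_of_lt_of_le hlt' hle) (lt_irrefl _)
    · left; rw [hg]; simp
  · -- shorten case
    push_neg at hcase
    have hxlt : ∀ x ∈ cmpl (a :: t), x < a := by
      intro x hx
      refine lt_of_le_of_ne (hcase x hx) ?_
      rintro rfl
      exact (mem_cmpl.mp hx) List.mem_cons_self
    have hlen3 : 3 ≤ (a :: t).length := by
      by_contra hcon
      have h1 : (a :: t).length = 1 := by
        have hmod := Nat.odd_iff.mp hodd
        simp only [List.length_cons] at hcon hmod ⊢
        omega
      have ht : t = [] := by
        simp only [List.length_cons] at h1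
        exact List.length_eq_zero_iff.mp (by omega)
      subst ht
      have hatop : a = ⟨m - 1, by omega⟩ := by
        by_contra hne'
        have htopC : (⟨m - 1, by omega⟩ : Fin m) ∈ cmpl [a] := by
          rw [mem_cmpl]
          simp only [List.mem_singleton]
          exact fun h => hne' h.symm
        exact absurd (fin_le_top h0 a) (not_le.mpr (hxlt _ htopC))
      exact hne (by rw [hatop]; rfl)
    obtain ⟨a₁, t₁, rfl⟩ : ∃ a₁ t₁, t = a₁ :: t₁ := by
      cases t with
      | nil => simp at hlen3
      | cons a₁ t₁ => exact ⟨a₁, t₁, rfl⟩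
    obtain ⟨a₂, t₂, rfl⟩ : ∃ a₂ t₂, t₁ = a₂ :: t₂ := by
      cases t₁ with
      | nil => simp at hlen3
      | cons a₂ t₂ => exact ⟨a₂, t₂, rfl⟩
    obtain ⟨haa₁, ha₂a₁, halt₂⟩ := altL_cons₂.mp halt
    have ha₂a₁' : a₂ < a₁ := by exact ha₂a₁ (by simp)
    have hg : gmap (a :: a₁ :: a₂ :: t₂) = a₂ :: t₂ := by
      rw [gmap_shorten, List.drop_one, List.tail_cons]
      rintro ⟨h2', hlt'⟩
      obtain ⟨y, hyC, hay⟩ := exists_gt_of_lt_max hlt'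
      exact absurd (hcase y hyC) (not_le.mpr hay)
    have hCrel : cmpl (a :: a₁ :: a₂ :: t₂) = ((cmpl (a₂ :: t₂)).erase a₁).erase a :=
      cmpl_cons₂ a a₁ (a₂ :: t₂)
    have hnd₂ : (a₂ :: t₂).Nodup := (List.nodup_cons.mp (List.nodup_cons.mp hnd).2).2
    have ha₁C' : a₁ ∈ cmpl (a₂ :: t₂) := by
      rw [mem_cmpl]
      exact (List.nodup_cons.mp (List.nodup_cons.mp hnd).2).1
    have haC' : a ∈ cmpl (a₂ :: t₂) := by
      rw [mem_cmpl]
      intro h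
      exact (List.nodup_cons.mp hnd).1 (List.mem_cons_of_mem _ h)
    have haa₁ne : a ≠ a₁ := ne_of_lt haa₁
    have hmemC : ∀ x ∈ cmpl (a₂ :: t₂), x = a₁ ∨ x = a ∨ x ∈ cmpl (a :: a₁ :: a₂ :: t₂) := by
      intro x hx
      by_cases h1 : x = a₁
      · exact Or.inl h1
      by_cases h2 : x = a
      · exact Or.inr (Or.inl h2)
      · refine Or.inr (Or.inr ?_)
        rw [hCrel]
        exact Finset.mem_erase.mpr ⟨h2, Finset.mem_erase.mpr ⟨h1, hx⟩⟩
    have hbub' : ∀ x ∈ cmpl (a₂ :: t₂), x ≤ a₁ := by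
      intro x hx
      rcases hmemC x hx with rfl | rfl | hxC
      · exact le_refl _
      · exact le_of_lt haa₁
      · exact le_of_lt (lt_trans (hxlt x hxC) haa₁)
    have hcub' : ∀ x ∈ (cmpl (a₂ :: t₂)).erase a₁, x ≤ a := by
      intro x hx
      obtain ⟨hxne, hxC'⟩ := Finset.mem_erase.mp hx
      rcases hmemC x hxC' with rfl | rfl | hxC
      · exact absurd rfl hxne
      · exact le_refl _
      · exact le_of_lt (hxlt x hxC)
    have hbmax' : (cmpl (a₂ :: t₂)).max = ↑a₁ := max_eq_coe ha₁C' hbub'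
    have hcmax' : ((cmpl (a₂ :: t₂)).erase a₁).max = ↑a :=
      max_eq_coe (Finset.mem_erase.mpr ⟨haa₁ne, haC'⟩) hcub'
    have h2' : 2 ≤ (cmpl (a₂ :: t₂)).card := by
      rw [Nat.succ_le_iff]
      exact Finset.one_lt_card.mpr ⟨a₁, ha₁C', a, haC', haa₁ne.symm⟩
    have hgg : gmap (a₂ :: t₂) = a :: a₁ :: a₂ :: t₂ :=
      gmap_extend h2' hbmax' hcmax' ha₂a₁'
    have hmem₂ : gmap (a :: a₁ :: a₂ :: t₂) ∈ Objs m := by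
      rw [hg, mem_Objs]
      refine ⟨hnd₂, ?_, halt₂⟩
      obtain ⟨r, hr⟩ := hodd
      simp only [List.length_cons] at hr ⊢
      exact ⟨r - 1, by omega⟩
    refine ⟨hmem₂, ?_, by rw [hg, hgg], by right; rw [hg]; simp⟩
    · rw [hg]
      intro hfix
      unfold vfix at hfix
      injection hfix with h1 h2
      rw [h1] at ha₂a₁'
      exact absurd (fin_le_top h0 a₁) (not_le.mpr ha₂a₁')

lemma length_pos_of_mem_Objs {m : ℕ} {v : List (Fin m)} (hv : v ∈ Objs m) : 1 ≤ v.length := by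
  obtain ⟨r, hr⟩ := (mem_Objs.mp hv).2.1
  omega

lemma S_one (m : ℕ) (hm : Odd m) :
    ∑ v ∈ Objs m, (-1 : ℤ) ^ ((v.length - 1) / 2) = 1 := by
  have h0 : 0 < m := hm.pos
  have hv₀ : vfix m h0 ∈ Objs m := vfix_mem_Objs h0
  rw [← Finset.sum_erase_add _ _ hv₀]
  have hzero : ∑ v ∈ (Objs m).erase (vfix m h0), (-1 : ℤ) ^ ((v.length - 1) / 2) = 0 := by
    refine Finset.sum_involution (fun v _ => gmap v) ?_ ?_ ?_ ?_
    · intro v hv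
      obtain ⟨hvne, hvO⟩ := Finset.mem_erase.mp hv
      obtain ⟨hm1, hm2, hm3, hm4⟩ := gmap_spec hm h0 hvO hvne
      have hl1 : 1 ≤ v.length := length_pos_of_mem_Objs hvO
      have hl2 : 1 ≤ (gmap v).length := length_pos_of_mem_Objs hm1
      rcases hm4 with h | h
      · have he : ((gmap v).length - 1) / 2 = (v.length - 1) / 2 + 1 := by
          have h2 := Nat.odd_iff.mp (mem_Objs.mp hvO).2.1
          omega
        rw [he, pow_succ]; ring
      · have he : (v.length - 1) / 2 = ((gmap v).length - 1) / 2 + 1 := by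
          have h2 := Nat.odd_iff.mp (mem_Objs.mp hm1).2.1
          omega
        rw [he, pow_succ]; ring
    · intro v hv _
      obtain ⟨hvne, hvO⟩ := Finset.mem_erase.mp hv
      obtain ⟨hm1, hm2, hm3, hm4⟩ := gmap_spec hm h0 hvO hvne
      intro heq
      have heq' : gmap v = v := heq
      have hlen : (gmap v).length = v.length := by rw [heq']
      omega
    · intro v hv
      obtain ⟨hvne, hvO⟩ := Finset.mem_erase.mp hv
      obtain ⟨hm1, hm2, hm3, hm4⟩ := gmap_spec hm h0 hvO hvne
      exact Finset.mem_erase.mpr ⟨hm2, hm1⟩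
    · intro v hv
      obtain ⟨hvne, hvO⟩ := Finset.mem_erase.mp hv
      exact (gmap_spec hm h0 hvO hvne).2.2.1
  rw [hzero, zero_add, vfix]
  simp

lemma S_eq (m : ℕ) :
    ∑ v ∈ Objs m, (-1 : ℤ) ^ ((v.length - 1) / 2)
      = ∑ k ∈ Finset.range (m + 1),
          (if Odd k then (-1 : ℤ) ^ ((k - 1) / 2) * (m.choose k) * (eulerZigzag k) else 0) := by
  rw [← Finset.sum_fiberwise_of_maps_to (g := fun v : List (Fin m) => v.length)
    (t := Finset.range (m + 1)) (fun v hv => Finset.mem_range.mpr (Nat.lt_succ_of_le (by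
      have := (mem_Objs.mp hv).1.length_le_card
      simpa using this)))]
  refine Finset.sum_congr rfl (fun k hk => ?_)
  by_cases hko : Odd k
  · rw [if_pos hko]
    calc ∑ v ∈ (Objs m).filter (fun v => v.length = k), (-1 : ℤ) ^ ((v.length - 1) / 2)
        = ∑ _v ∈ (Objs m).filter (fun v => v.length = k), (-1 : ℤ) ^ ((k - 1) / 2) :=
          Finset.sum_congr rfl (fun v hv => by rw [(Finset.mem_filter.mp hv).2])
      _ = ((Objs m).filter (fun v => v.length = k)).card • (-1 : ℤ) ^ ((k - 1) / 2) :=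
          Finset.sum_const _
      _ = _ := by
          rw [card_fiber m k hko, nsmul_eq_mul]
          push_cast
          ring
  · rw [if_neg hko]
    have hempty : (Objs m).filter (fun v => v.length = k) = ∅ := by
      ext v
      simp only [Finset.mem_filter, Finset.notMem_empty, iff_false, not_and]
      intro hv hlen
      exact hko (hlen ▸ (mem_Objs.mp hv).2.1)
    rw [hempty, Finset.sum_empty]

noncomputable def gNum (m : ℕ) : ℤ :=
  if m = 0 then 1 else if Odd m then (-1) ^ ((m + 1) / 2) * (eulerZigzag m : ℤ) else 0

lemma key_identity (m : ℕ) (hm : Odd m) :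
    ∑ k ∈ Finset.range (m + 1),
      (if Odd k then (-1 : ℤ) ^ ((k - 1) / 2) * (m.choose k) * (eulerZigzag k) else 0) = 1 := by
  rw [← S_eq]
  exact S_one m hm

lemma term_eq (m k : ℕ) :
    (m.choose k : ℤ) * gNum k
      = (if k = 0 then 1 else 0)
        - (if Odd k then (-1 : ℤ) ^ ((k - 1) / 2) * (m.choose k) * (eulerZigzag k) else 0) := by
  rcases eq_or_ne k 0 with rfl | hk0
  · simp [gNum]
  · by_cases hk : Odd k
    · have h2 : (k + 1) / 2 = (k - 1) / 2 + 1 := by omega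
      rw [gNum, if_neg hk0, if_pos hk, if_neg hk0, if_pos hk, h2, pow_succ]
      ring
    · simp [gNum, hk0, hk]

lemma fNum_eq_gNum (m : ℕ) : fNum m = gNum m := by
  induction m using Nat.strong_induction_on with
  | _ m ih =>
    rcases eq_or_ne m 0 with rfl | hm0
    · rw [fNum_zero, gNum]; simp
    · by_cases hm : Odd m
      · have hsum : ∑ k ∈ Finset.range (m + 1), (m.choose k : ℤ) * gNum k = 0 := by
          rw [Finset.sum_congr rfl (fun k _ => term_eq m k), Finset.sum_sub_distrib,
            key_identity m hm, Finset.sum_ite_eq' (Finset.range (m + 1)) 0 (fun _ => (1 : ℤ))]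
          simp
        rw [Finset.sum_range_succ, Nat.choose_self] at hsum
        have hsum' : ∑ k ∈ Finset.range m, (m.choose k : ℤ) * gNum k = - gNum m := by
          push_cast at hsum; linarith
        rw [fNum_odd hm0 hm, Finset.sum_congr rfl
          (fun k hk => by rw [ih k (Finset.mem_range.mp hk)]), hsum']
        ring
      · rw [fNum_even hm0 hm, gNum, if_neg hm0, if_neg hm]

end BAux

/-- for odd `n`, `b(K_n) = (-1)^{(n+1)/2} ⬝ A_n`. -/
theorem bNumber_completeGraph (n : ℕ) (hn : Odd n) :
    bNumber (SimpleGraph.completeGraph (Fin n)) = (-1) ^ ((n + 1) / 2) * (eulerZigzag n : ℤ) := by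
  have h0 : n ≠ 0 := by rintro rfl; simp at hn
  rw [bNumber, BAux.bNum_complete, BAux.fNum_eq_gNum, BAux.gNum, Finset.card_univ,
    Fintype.card_fin, if_neg h0, if_pos hn]
end
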